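/- arXiv:quant-ph/0604102 — 15 statements merged into one kernel-verified Lean document; each statement's English description precedes it below -/
import Mathlib

section
/- Let n be a positive integer, q a prime power with gcd(n,q)=1, and let m be the multiplicative order of q modulo n. If q^⌊m/2⌋ < n ≤ q^m - 1, then for every integer x with 1 ≤ x ≤ n·q^⌈m/2⌉/(q^m - 1), the q-ary cyclotomic coset C_x = { x·q^j mod n : 0 ≤ j < m } has cardinality exactly m. -/
/-- Key arithmetic lemma: if `1 ≤ e ≤ m/2` and `x ≤ n q^⌈m/2⌉/(q^m-1)` then
`n` cannot divide `x(q^e - 1)`. -/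
lemma cyclotomic_aux (n q m x e : ℕ) (hq2 : 2 ≤ q) (hm1 : 1 ≤ m)
    (hx1 : 1 ≤ x)
    (hx2 : (x : ℝ) ≤ (n : ℝ) * (q : ℝ) ^ ((m + 1) / 2) / ((q : ℝ) ^ m - 1))
    (he1 : 1 ≤ e) (he2 : e ≤ m / 2) : ¬ (n ∣ x * q ^ e - x) := by
  intro hdvd
  have hqe : 2 ≤ q ^ e := le_trans hq2 (Nat.le_self_pow (by omega) q)
  have hxx : x * 2 ≤ x * q ^ e := Nat.mul_le_mul_left x hqe
  have hpos : 0 < x * q ^ e - x := by omega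
  have hn0 : 0 < n := by
    rcases Nat.eq_zero_or_pos n with h | h
    · subst h; rw [zero_dvd_iff] at hdvd; omega
    · exact h
  have hn_le : n ≤ x * q ^ e - x := Nat.le_of_dvd hpos hdvd
  set c := (m + 1) / 2 with hc
  have hce : c + e ≤ m := by omega
  have hq1 : (1 : ℝ) ≤ (q : ℝ) := by exact_mod_cast (by omega : 1 ≤ q)
  have hq2' : (2 : ℝ) ≤ (q : ℝ) := by exact_mod_cast hq2
  have hQ : (1 : ℝ) < (q : ℝ) ^ m := by
    calc (1 : ℝ) < 2 := one_lt_two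
    _ ≤ (q : ℝ) := hq2'
    _ ≤ (q : ℝ) ^ m := le_self_pow₀ hq1 (by omega)
  have h1 : (x : ℝ) * ((q : ℝ) ^ m - 1) ≤ (n : ℝ) * (q : ℝ) ^ c :=
    (le_div_iff₀ (by linarith)).mp hx2
  have h2 : (q : ℝ) ^ c * (q : ℝ) ^ e ≤ (q : ℝ) ^ m := by
    rw [← pow_add]; exact pow_le_pow_right₀ hq1 hce
  have h3 : (q : ℝ) ≤ (q : ℝ) ^ c := le_self_pow₀ hq1 (by omega)
  have hqe' : (2 : ℝ) ≤ (q : ℝ) ^ e := by exact_mod_cast hqe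
  have hn1 : (1 : ℝ) ≤ (n : ℝ) := by exact_mod_cast hn0
  have hx1' : (1 : ℝ) ≤ (x : ℝ) := by exact_mod_cast hx1
  have hne : (n : ℝ) ≤ (x : ℝ) * (q : ℝ) ^ e - (x : ℝ) := by
    have hle : x ≤ x * q ^ e := by omega
    have : ((x * q ^ e - x : ℕ) : ℝ) = (x : ℝ) * (q : ℝ) ^ e - (x : ℝ) := by
      push_cast [Nat.cast_sub hle]; ring
    rw [← this]; exact_mod_cast hn_le
  have hmul := mul_le_mul_of_nonneg_right h1 (show (0 : ℝ) ≤ (q : ℝ) ^ e - 1 by linarith)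
  have hmul2 := mul_le_mul_of_nonneg_left h2 (show (0 : ℝ) ≤ (n : ℝ) by linarith)
  have hmul3 := mul_le_mul_of_nonneg_left h3 (show (0 : ℝ) ≤ (n : ℝ) by linarith)
  nlinarith [mul_le_mul_of_nonneg_right hne (show (0 : ℝ) ≤ (q : ℝ) ^ m - 1 by linarith)]

/-- If `q^⌊m/2⌋ < n ≤ q^m - 1` where `m = ord_n(q)`, then for every
`1 ≤ x ≤ n·q^⌈m/2⌉/(q^m - 1)` the q-ary cyclotomic coset
`C_x = { x·q^j mod n : 0 ≤ j < m }` has cardinality exactly `m`. -/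
theorem cyclotomic_coset_card (n q m x : ℕ)
    (hq : IsPrimePow q) (hn : 0 < n) (hcop : Nat.Coprime n q)
    (hm : m = orderOf (q : ZMod n))
    (hlow : q ^ (m / 2) < n) (hhigh : n ≤ q ^ m - 1)
    (hx1 : 1 ≤ x)
    (hx2 : (x : ℝ) ≤ (n : ℝ) * (q : ℝ) ^ ((m + 1) / 2) / ((q : ℝ) ^ m - 1)) :
    ((Finset.range m).image (fun j => x * q ^ j % n)).card = m := by
  have hq2 : 2 ≤ q := hq.two_le
  have hm1 : 1 ≤ m := by
    by_contra h
    have : m = 0 := by omega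
    rw [this] at hhigh; simp at hhigh; omega
  have hu : IsUnit (q : ZMod n) := (ZMod.isUnit_iff_coprime q n).mpr hcop.symm
  have hqm : (q : ZMod n) ^ m = 1 := by rw [hm]; exact pow_orderOf_eq_one _
  -- key: no nontrivial fixed point x * q^d = x for 1 ≤ d ≤ m - 1
  have key : ∀ d : ℕ, 1 ≤ d → d ≤ m - 1 → (x : ZMod n) * (q : ZMod n) ^ d ≠ (x : ZMod n) := by
    intro d hd1 hd2 hfix
    -- reduce to e ≤ m/2
    have main : ∀ e : ℕ, 1 ≤ e → e ≤ m / 2 → (x : ZMod n) * (q : ZMod n) ^ e = (x : ZMod n) → False := by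
      intro e he1 he2 hfe
      have hnat : ((x * q ^ e : ℕ) : ZMod n) = ((x : ℕ) : ZMod n) := by push_cast; exact hfe
      have hmod : x * q ^ e ≡ x [MOD n] := (ZMod.natCast_eq_natCast_iff _ _ _).mp hnat
      have hle : x ≤ x * q ^ e := Nat.le_mul_of_pos_right x (by positivity)
      have hdvd : n ∣ x * q ^ e - x := (Nat.modEq_iff_dvd' hle).mp hmod.symm
      exact cyclotomic_aux n q m x e hq2 hm1 hx1 hx2 he1 he2 hdvd
    by_cases hcase : d ≤ m / 2
    · exact main d hd1 hcase hfix
    · have he : (x : ZMod n) * (q : ZMod n) ^ (m - d) = (x : ZMod n) := by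
        have : (x : ZMod n) * (q : ZMod n) ^ d * (q : ZMod n) ^ (m - d) = (x : ZMod n) * (q : ZMod n) ^ (m - d) := by
          rw [hfix]
        rw [mul_assoc, ← pow_add, show d + (m - d) = m by omega, hqm, mul_one] at this
        exact this.symm
      exact main (m - d) (by omega) (by omega) he
  have step : ∀ i j : ℕ, i < j → j < m → x * q ^ i % n = x * q ^ j % n → False := by
    intro i j hlt hj hij
    have hmodeq : x * q ^ i ≡ x * q ^ j [MOD n] := hij
    have hz : ((x * q ^ i : ℕ) : ZMod n) = ((x * q ^ j : ℕ) : ZMod n) :=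
      (ZMod.natCast_eq_natCast_iff _ _ _).mpr hmodeq
    push_cast at hz
    rw [show j = (j - i) + i by omega, pow_add, ← mul_assoc] at hz
    have hfix : (x : ZMod n) * (q : ZMod n) ^ (j - i) = (x : ZMod n) :=
      ((hu.pow i).mul_right_cancel hz.symm)
    exact key (j - i) (by omega) (by omega) hfix
  rw [Finset.card_image_of_injOn, Finset.card_range]
  intro i hi j hj hij
  simp only [Finset.mem_coe, Finset.mem_range] at hi hj
  rcases lt_trichotomy i j with h | h | h
  · exact absurd hij (by intro hh; exact step i j h hj hh)
  · exact h
  · exact absurd hij (by intro hh; exact step j i h hi hh.symm)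
end

section
/- Let n be a positive integer, q a prime power with gcd(n,q)=1, m = ord_n(q), and q^⌊m/2⌋ < n ≤ q^m - 1. If x and y are distinct integers in the range 1 ≤ x, y ≤ min{⌊n·q^⌈m/2⌉/(q^m−1) − 1⌋, n−1} with x ≢ 0 (mod q) and y ≢ 0 (mod q), then the q-ary cyclotomic cosets C_x and C_y modulo n are disjoint. -/
/-!
Suppose `x q^i ≡ y q^j (mod n)`. Since `q^m ≡ 1`, this gives `x q^b ≡ y` for some `0 ≤ b < m`;
`b = 0` is excluded by `x ≠ y`. If `b ≤ ⌊m/2⌋`, the bound on `x` makes `x q^b < n`, so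
`x q^b = y` as integers and `q ∣ y`. Otherwise `y q^(m-b) ≡ x` with `0 < m - b ≤ ⌊m/2⌋`, and the
same argument gives `q ∣ x`. The bound on `x` enters as `(x + 1)(q^m - 1) ≤ n q^⌈m/2⌉`;
multiplied by `q^b` it leaves no room for `x q^b ≥ n`.
-/

theorem exists_lt_mul_pow_eq_of_pow_eq_one {M : Type*} [CommMonoid M] {u a b : M} {m i j : ℕ}
    (hm : 0 < m) (hu : u ^ m = 1) (h : a * u ^ i = b * u ^ j) :
    ∃ k < m, a * u ^ k = b := by
  refine ⟨(i + (m - 1) * j) % m, Nat.mod_lt _ hm, ?_⟩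
  have hj : j + (m - 1) * j = m * j := by
    rw [Nat.sub_one_mul]
    have := Nat.le_mul_of_pos_left j hm
    omega
  rw [← pow_eq_pow_mod _ hu, pow_add, ← mul_assoc, h, mul_assoc, ← pow_add, hj, pow_mul, hu,
    one_pow, mul_one]

theorem succ_mul_le_of_le_floor_div_sub_one {x N D : ℕ} (hx : x ≠ 0)
    (h : x ≤ ⌊(N : ℝ) / D - 1⌋₊) : (x + 1) * D ≤ N := by
  have hxr := (Nat.le_floor_iff' hx).1 h
  rcases Nat.eq_zero_or_pos D with rfl | hD
  · have : (1 : ℝ) ≤ x := by exact_mod_cast Nat.one_le_iff_ne_zero.2 hx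
    simp only [Nat.cast_zero, div_zero] at hxr
    linarith
  · have hD' : (0 : ℝ) < D := by exact_mod_cast hD
    have : ((x : ℝ) + 1) * D ≤ N := (le_div_iff₀ hD').1 (by linarith)
    exact_mod_cast this

theorem mul_pow_lt_of_succ_mul_le {n q m e x a : ℕ} (hn : 0 < n) (hnq : n ≤ q ^ m - 1)
    (ha : 0 < a) (hea : e + a ≤ m) (hx : (x + 1) * (q ^ m - 1) ≤ n * q ^ e) :
    x * q ^ a < n := by
  have hq : 2 ≤ q := by
    by_contra! hq
    have : q ^ m ≤ 1 := pow_le_one₀ (Nat.zero_le q) (by omega)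
    omega
  set D := q ^ m - 1
  have hQ : q ^ m = D + 1 := by omega
  have hqa : 2 ≤ q ^ a := hq.trans (Nat.le_self_pow ha.ne' q)
  have hbound : (x + 1) * q ^ a * D ≤ n * (D + 1) :=
    calc (x + 1) * q ^ a * D = (x + 1) * D * q ^ a := by ring
      _ ≤ n * q ^ e * q ^ a := Nat.mul_le_mul_right _ hx
      _ = n * q ^ (e + a) := by ring
      _ ≤ n * q ^ m := Nat.mul_le_mul_left _ (Nat.pow_le_pow_right (by omega) hea)
      _ = n * (D + 1) := by rw [hQ]
  by_contra! hlt
  -- otherwise `(x + 1) q^a D ≥ n D + 2 D ≥ n D + 2 n > n (D + 1)`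
  nlinarith [Nat.mul_le_mul_right D hlt, Nat.mul_le_mul_right D hqa]

theorem dvd_of_natCast_mul_pow_eq {n q a b k : ℕ} (hk : k ≠ 0) (hlt : a * q ^ k < n)
    (hb : b < n) (h : (a : ZMod n) * (q : ZMod n) ^ k = b) : q ∣ b := by
  rw [← Nat.cast_pow, ← Nat.cast_mul, ZMod.natCast_eq_natCast_iff', Nat.mod_eq_of_lt hlt,
    Nat.mod_eq_of_lt hb] at h
  exact h ▸ Dvd.dvd.mul_left (dvd_pow_self q hk) a

theorem natCast_mul_pow_ne_of_add_le {n q m e x y k : ℕ} (hnq : n ≤ q ^ m - 1) (hk : 0 < k)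
    (hek : e + k ≤ m) (hx : (x + 1) * (q ^ m - 1) ≤ n * q ^ e) (hy : y < n) (hyq : ¬ q ∣ y) :
    (x : ZMod n) * (q : ZMod n) ^ k ≠ y := fun h =>
  hyq <| dvd_of_natCast_mul_pow_eq hk.ne' (mul_pow_lt_of_succ_mul_le (by omega) hnq hk hek hx) hy h

theorem natCast_mul_pow_ne {n q m e x y b : ℕ} (hnq : n ≤ q ^ m - 1) (he : 2 * e ≤ m + 1)
    (hu : (q : ZMod n) ^ m = 1) (hxn : x < n) (hyn : y < n)
    (hx : (x + 1) * (q ^ m - 1) ≤ n * q ^ e) (hy : (y + 1) * (q ^ m - 1) ≤ n * q ^ e)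
    (hxq : ¬ q ∣ x) (hyq : ¬ q ∣ y) (hxy : x ≠ y) (hb : b < m) :
    (x : ZMod n) * (q : ZMod n) ^ b ≠ y := by
  intro h
  rcases Nat.eq_zero_or_pos b with rfl | hb0
  · rw [pow_zero, mul_one, ZMod.natCast_eq_natCast_iff', Nat.mod_eq_of_lt hxn,
      Nat.mod_eq_of_lt hyn] at h
    exact hxy h
  by_cases hbe : e + b ≤ m
  · exact natCast_mul_pow_ne_of_add_le hnq hb0 hbe hx hyn hyq h
  · have hyx : (y : ZMod n) * (q : ZMod n) ^ (m - b) = x := by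
      rw [← h, mul_assoc, ← pow_add, Nat.add_sub_cancel' hb.le, hu, mul_one]
    exact natCast_mul_pow_ne_of_add_le hnq (by omega) (by omega) hy hxn hxq hyx

theorem cyclotomic_cosets_disjoint_general (n q m x y : ℕ)
    (hm : m = orderOf (q : ZMod n))
    (hhigh : n ≤ q ^ m - 1)
    (hxy : x ≠ y)
    (hx1 : 1 ≤ x) (hy1 : 1 ≤ y)
    (hx2 : x ≤ min (⌊(n : ℝ) * (q : ℝ) ^ ((m + 1) / 2) / ((q : ℝ) ^ m - 1) - 1⌋₊) (n - 1))
    (hy2 : y ≤ min (⌊(n : ℝ) * (q : ℝ) ^ ((m + 1) / 2) / ((q : ℝ) ^ m - 1) - 1⌋₊) (n - 1))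
    (hxq : ¬ q ∣ x) (hyq : ¬ q ∣ y) :
    Disjoint {z : ℕ | ∃ j : ℕ, z = x * q ^ j % n} {z : ℕ | ∃ j : ℕ, z = y * q ^ j % n} := by
  have hxn : x < n := by have := (le_min_iff.1 hx2).2; omega
  have hyn : y < n := by have := (le_min_iff.1 hy2).2; omega
  have hm0 : 0 < m := Nat.pos_of_ne_zero fun h => by simp only [h, pow_zero] at hhigh; omega
  have hcast : (n : ℝ) * (q : ℝ) ^ ((m + 1) / 2) / ((q : ℝ) ^ m - 1) =
      ((n * q ^ ((m + 1) / 2) : ℕ) : ℝ) / ((q ^ m - 1 : ℕ) : ℝ) := by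
    rw [Nat.cast_sub (by omega : 1 ≤ q ^ m)]
    push_cast
    rfl
  rw [hcast] at hx2 hy2
  have hxB := succ_mul_le_of_le_floor_div_sub_one (by omega) (le_min_iff.1 hx2).1
  have hyB := succ_mul_le_of_le_floor_div_sub_one (by omega) (le_min_iff.1 hy2).1
  have hu : (q : ZMod n) ^ m = 1 := hm ▸ pow_orderOf_eq_one _
  rw [Set.disjoint_left]
  rintro _ ⟨i, rfl⟩ ⟨j, hj⟩
  have hij : (x : ZMod n) * (q : ZMod n) ^ i = y * (q : ZMod n) ^ j := by
    exact_mod_cast (ZMod.natCast_eq_natCast_iff' _ _ _).2 hj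
  obtain ⟨b, hb, hxyb⟩ := exists_lt_mul_pow_eq_of_pow_eq_one hm0 hu hij
  exact natCast_mul_pow_ne hhigh (by omega) hu hxn hyn hxB hyB hxq hyq hxy hb hxyb

/-- under the stated range conditions, the q-ary cyclotomic cosets of
distinct `x, y` not divisible by `q` are disjoint. -/
theorem cyclotomic_cosets_disjoint (n q m x y : ℕ)
    (hq : IsPrimePow q) (hn : 0 < n) (hcop : Nat.Coprime n q)
    (hm : m = orderOf (q : ZMod n))
    (hlow : q ^ (m / 2) < n) (hhigh : n ≤ q ^ m - 1)
    (hxy : x ≠ y)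
    (hx1 : 1 ≤ x) (hy1 : 1 ≤ y)
    (hx2 : x ≤ min (⌊(n : ℝ) * (q : ℝ) ^ ((m + 1) / 2) / ((q : ℝ) ^ m - 1) - 1⌋₊) (n - 1))
    (hy2 : y ≤ min (⌊(n : ℝ) * (q : ℝ) ^ ((m + 1) / 2) / ((q : ℝ) ^ m - 1) - 1⌋₊) (n - 1))
    (hxq : ¬ q ∣ x) (hyq : ¬ q ∣ y) :
    Disjoint {z : ℕ | ∃ j : ℕ, z = x * q ^ j % n} {z : ℕ | ∃ j : ℕ, z = y * q ^ j % n} :=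
  cyclotomic_cosets_disjoint_general n q m x y hm hhigh hxy hx1 hy1 hx2 hy2 hxq hyq
end

section
/- Let q be a prime power, n a positive integer with gcd(n,q)=1, m = ord_n(q) ≥ 2, and set κ = n·(q^⌈m/2⌉ − 1 − (q−2)·[m odd])/(q^m − 1). If 2 ≤ δ ≤ ⌊κ⌋ and Z = C_1 ∪ C_2 ∪ ⋯ ∪ C_{δ−1} is the union of q-ary cyclotomic cosets modulo n, then Z ∩ Z^{-1} = ∅, where Z^{-1} = { n − z mod n : z ∈ Z }. -/
set_option maxHeartbeats 1000000

/-- Key real inequality: under the stated bounds, `x*q^c + y` cannot be a positive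
multiple of `n`. -/
lemma bch_real_key (n q m δ x y c : ℕ) (hq2 : 2 ≤ q) (hn : 0 < n)
    (hnd : n ∣ q ^ m - 1) (hm2 : 2 ≤ m)
    (hδ2 : 2 ≤ δ)
    (hδmax : δ ≤ ⌊(n : ℝ) * ((q : ℝ) ^ ((m + 1) / 2) - 1 -
        ((q : ℝ) - 2) * (if Odd m then 1 else 0)) / ((q : ℝ) ^ m - 1)⌋₊)
    (hx1 : 1 ≤ x) (hx2 : x ≤ δ - 1) (hy1 : 1 ≤ y) (hy2 : y ≤ δ - 1)
    (hc : c ≤ m / 2) (hdvd : n ∣ x * q ^ c + y) : False := by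
  set K : ℝ := (n : ℝ) * ((q : ℝ) ^ ((m + 1) / 2) - 1 -
      ((q : ℝ) - 2) * (if Odd m then 1 else 0)) / ((q : ℝ) ^ m - 1) with hKdef
  have hq1 : (1 : ℝ) < (q : ℝ) := by exact_mod_cast hq2
  have hqm1 : (1 : ℝ) < (q : ℝ) ^ m := one_lt_pow₀ hq1 (by omega)
  have hD : (0 : ℝ) < (q : ℝ) ^ m - 1 := by linarith
  have hδK : (δ : ℝ) ≤ K := by
    rcases le_or_gt 0 K with h | h
    · calc (δ : ℝ) ≤ (⌊K⌋₊ : ℝ) := by exact_mod_cast hδmax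
        _ ≤ K := Nat.floor_le h
    · have : ⌊K⌋₊ = 0 := Nat.floor_of_nonpos h.le
      omega
  have hcast : ((δ - 1 : ℕ) : ℝ) = (δ : ℝ) - 1 := by
    rw [Nat.cast_sub (by omega)]; norm_num
  have hxK : (x : ℝ) ≤ K - 1 := by
    have h2 : (x : ℝ) ≤ ((δ - 1 : ℕ) : ℝ) := by exact_mod_cast hx2
    rw [hcast] at h2; linarith
  have hyK : (y : ℝ) ≤ K - 1 := by
    have h2 : (y : ℝ) ≤ ((δ - 1 : ℕ) : ℝ) := by exact_mod_cast hy2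
    rw [hcast] at h2; linarith
  have hK2 : (2 : ℝ) ≤ K := le_trans (by exact_mod_cast hδ2) hδK
  have hge : n ≤ x * q ^ c + y := Nat.le_of_dvd (by positivity) hdvd
  have hgeR : (n : ℝ) ≤ (x : ℝ) * (q : ℝ) ^ c + y := by exact_mod_cast hge
  have hq4 : 4 ≤ q ^ m := by
    calc 4 = 2 ^ 2 := by norm_num
      _ ≤ q ^ 2 := Nat.pow_le_pow_left hq2 2
      _ ≤ q ^ m := Nat.pow_le_pow_right (by omega) hm2
  have hnle : n ≤ q ^ m - 1 := Nat.le_of_dvd (by omega) hnd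
  have hnleR : (n : ℝ) ≤ (q : ℝ) ^ m - 1 := by
    have h2 := (Nat.cast_le (α := ℝ)).mpr hnle
    rwa [Nat.cast_sub (by omega), Nat.cast_pow, Nat.cast_one] at h2
  set s : ℕ := m / 2 with hs
  have hqc : (q : ℝ) ^ c ≤ (q : ℝ) ^ s := pow_le_pow_right₀ hq1.le hc
  have hqs0 : (0 : ℝ) < (q : ℝ) ^ s := by positivity
  have hqc0 : (0 : ℝ) < (q : ℝ) ^ c := by positivity
  have step1 : (x : ℝ) * (q : ℝ) ^ c + y ≤ (K - 1) * ((q : ℝ) ^ s + 1) := by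
    have h1 : (x : ℝ) * (q : ℝ) ^ c ≤ (K - 1) * (q : ℝ) ^ s := by
      have hx0 : (0 : ℝ) ≤ (x : ℝ) := by positivity
      nlinarith
    nlinarith
  have step3 : K * ((q : ℝ) ^ s + 1) < (n : ℝ) + ((q : ℝ) ^ s + 1) := by
    have hn0 : (0 : ℝ) < (n : ℝ) := by exact_mod_cast hn
    rcases Nat.even_or_odd m with he | ho
    · have hne : ¬ Odd m := by simp [Nat.not_odd_iff_even.mpr he]
      obtain ⟨k, hk⟩ := he
      have hsk : s = k := by omega
      have hSk : (m + 1) / 2 = k := by omega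
      have hmq : (q : ℝ) ^ m = (q : ℝ) ^ k * (q : ℝ) ^ k := by
        rw [hk, pow_add]
      rw [hKdef]
      simp only [if_neg hne, mul_zero, sub_zero, hSk, hsk]
      rw [div_mul_eq_mul_div, div_lt_iff₀ hD]
      have hek : (0 : ℝ) < (q : ℝ) ^ k := by positivity
      nlinarith [mul_pos (show (0:ℝ) < (q:ℝ)^k + 1 by linarith) hD, hmq]
    · have hom : Odd m := ho
      obtain ⟨k, hk⟩ := ho
      have hk1 : 1 ≤ k := by omega
      have hsk : s = k := by omega
      have hSk : (m + 1) / 2 = k + 1 := by omega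
      have hmq : (q : ℝ) ^ m = (q : ℝ) ^ (k + 1) * (q : ℝ) ^ k := by
        rw [hk]; rw [show 2*k+1 = (k+1)+k by omega, pow_add]
      have hqk : (q : ℝ) ≤ (q : ℝ) ^ k := le_self_pow₀ (by linarith) (by omega)
      rw [hKdef]
      simp only [if_pos hom, mul_one, hSk, hsk]
      rw [div_mul_eq_mul_div, div_lt_iff₀ hD]
      have h0 : (0 : ℝ) ≤ (q : ℝ) ^ k - q + 2 := by linarith
      have h1 : (n : ℝ) * ((q : ℝ) ^ k - q + 2) ≤ ((q : ℝ) ^ m - 1) * ((q : ℝ) ^ k - q + 2) :=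
        mul_le_mul_of_nonneg_right hnleR h0
      have h2 : ((q : ℝ) ^ m - 1) * ((q : ℝ) ^ k - q + 2) < ((q : ℝ) ^ m - 1) * ((q : ℝ) ^ k + 1) := by
        have h3 : (q : ℝ) ^ k - q + 2 < (q : ℝ) ^ k + 1 := by linarith
        exact (mul_lt_mul_iff_right₀ hD).mpr h3
      have hq1k : (q : ℝ) ^ (k + 1) = q * (q : ℝ) ^ k := by ring
      nlinarith [h1, h2, hmq, hq1k]
  nlinarith [step1, step3, hgeR]

/-- if `2 ≤ δ ≤ ⌊κ⌋` with
`κ = n(q^⌈m/2⌉ − 1 − (q−2)[m odd])/(q^m − 1)`, then the defining set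
`Z = C_1 ∪ ⋯ ∪ C_{δ−1}` of the narrow-sense BCH code satisfies `Z ∩ Z⁻¹ = ∅`. -/
theorem bch_euclidean_dual_containing_sufficient (n q m δ : ℕ)
    (hq : IsPrimePow q) (hn : 0 < n) (hcop : Nat.Coprime n q)
    (hm : m = orderOf (q : ZMod n)) (hm2 : 2 ≤ m)
    (hδ2 : 2 ≤ δ)
    (hδmax : δ ≤ ⌊(n : ℝ) * ((q : ℝ) ^ ((m + 1) / 2) - 1 -
        ((q : ℝ) - 2) * (if Odd m then 1 else 0)) / ((q : ℝ) ^ m - 1)⌋₊)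
    (Z : Set ℕ)
    (hZ : Z = ⋃ x ∈ Set.Icc 1 (δ - 1), {z : ℕ | ∃ j : ℕ, z = x * q ^ j % n}) :
    Z ∩ ((fun z => (n - z % n) % n) '' Z) = ∅ := by
  haveI : NeZero n := ⟨hn.ne'⟩
  have hq2 : 2 ≤ q := hq.two_le
  set u : ZMod n := (q : ZMod n) with hu_def
  have hu : u ^ m = 1 := by rw [hm]; exact pow_orderOf_eq_one u
  -- n ∣ q^m - 1
  have hqm1 : 1 ≤ q ^ m := Nat.one_le_pow _ _ (by omega)
  have hnd : n ∣ q ^ m - 1 := by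
    have h1 : ((q ^ m : ℕ) : ZMod n) = ((1 : ℕ) : ZMod n) := by
      push_cast
      exact hu
    have h2 : q ^ m ≡ 1 [MOD n] := (ZMod.natCast_eq_natCast_iff _ _ _).mp h1
    exact (Nat.modEq_iff_dvd' hqm1).mp h2.symm
  -- the main contradiction engine
  have main : ∀ x y a : ℕ, 1 ≤ x → x ≤ δ - 1 → 1 ≤ y → y ≤ δ - 1 → a ≤ m →
      (x : ZMod n) * u ^ a + (y : ZMod n) = 0 → False := by
    intro x y a hx1 hx2 hy1 hy2 ham heq
    rcases le_or_gt a (m / 2) with h | h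
    · have hz : ((x * q ^ a + y : ℕ) : ZMod n) = 0 := by push_cast; exact heq
      have hdvd : n ∣ x * q ^ a + y := (ZMod.natCast_eq_zero_iff _ _).mp hz
      exact bch_real_key n q m δ x y a hq2 hn hnd hm2 hδ2 hδmax hx1 hx2 hy1 hy2 h hdvd
    · -- swap: y * u^(m-a) + x = 0
      have heq2 : (y : ZMod n) * u ^ (m - a) + (x : ZMod n) = 0 := by
        have h3 := congrArg (fun t => t * u ^ (m - a)) heq
        simp only [add_mul, mul_assoc, ← pow_add, zero_mul] at h3
        rw [show a + (m - a) = m by omega, hu, mul_one] at h3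
        linear_combination h3
      have hma : m - a ≤ m / 2 := by omega
      have hz : ((y * q ^ (m - a) + x : ℕ) : ZMod n) = 0 := by push_cast; exact heq2
      have hdvd : n ∣ y * q ^ (m - a) + x := (ZMod.natCast_eq_zero_iff _ _).mp hz
      exact bch_real_key n q m δ y x (m - a) hq2 hn hnd hm2 hδ2 hδmax hy1 hy2 hx1 hx2 hma hdvd
  rw [Set.eq_empty_iff_forall_notMem]
  rintro z ⟨hz1, w, hw, hwz⟩
  rw [hZ] at hz1 hw
  simp only [Set.mem_iUnion, Set.mem_Icc, Set.mem_setOf_eq] at hz1 hw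
  obtain ⟨x, ⟨hx1, hx2⟩, j, hzx⟩ := hz1
  obtain ⟨y, ⟨hy1, hy2⟩, i, hwy⟩ := hw
  -- basic facts
  have hwlt : w < n := hwy ▸ Nat.mod_lt _ hn
  -- cast to ZMod n
  have hzc : (z : ZMod n) = (x : ZMod n) * u ^ j := by
    rw [hzx]
    push_cast [ZMod.natCast_mod]
    ring
  have hwc : (w : ZMod n) = (y : ZMod n) * u ^ i := by
    rw [hwy]
    push_cast [ZMod.natCast_mod]
    ring
  have hzc2 : (z : ZMod n) = -(w : ZMod n) := by
    have : z = (n - w) % n := by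
      rw [← hwz]; simp [Nat.mod_eq_of_lt hwlt]
    rw [this, ZMod.natCast_mod, Nat.cast_sub hwlt.le, ZMod.natCast_self]
    ring
  have key : (x : ZMod n) * u ^ j + (y : ZMod n) * u ^ i = 0 := by
    rw [← hzc, ← hwc, hzc2]; ring
  -- reduce exponents mod m
  have hmpos : 0 < m := by omega
  have hured : ∀ t : ℕ, u ^ t = u ^ (t % m) := by
    intro t
    conv_lhs => rw [← Nat.div_add_mod t m]
    rw [pow_add, pow_mul, hu, one_pow, one_mul]
  set j' : ℕ := j % m with hj'
  set i' : ℕ := i % m with hi'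
  have hj'm : j' < m := Nat.mod_lt _ hmpos
  have hi'm : i' < m := Nat.mod_lt _ hmpos
  rw [hured j, hured i, ← hj', ← hi'] at key
  rcases le_or_gt i' j' with hle | hlt
  · -- a = j' - i'
    have heq : (x : ZMod n) * u ^ (j' - i') + (y : ZMod n) = 0 := by
      have h3 := congrArg (fun t => t * u ^ (m - i')) key
      simp only [add_mul, mul_assoc, ← pow_add, zero_mul] at h3
      rw [show j' + (m - i') = (j' - i') + m by omega,
        show i' + (m - i') = m by omega, pow_add, hu, mul_one] at h3
      rw [← h3]; ring
    exact main x y (j' - i') hx1 hx2 hy1 hy2 (by omega) heq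
  · -- b = i' - j'
    have heq : (y : ZMod n) * u ^ (i' - j') + (x : ZMod n) = 0 := by
      have h3 := congrArg (fun t => t * u ^ (m - j')) key
      simp only [add_mul, mul_assoc, ← pow_add, zero_mul] at h3
      rw [show i' + (m - j') = (i' - j') + m by omega,
        show j' + (m - j') = m by omega, pow_add, hu, mul_one] at h3
      rw [← h3]; ring
    exact main y x (i' - j') hy1 hy2 hx1 hx2 (by omega) heq
end

section
/- Let q be a prime power, m = ord_n(q) ≥ 2, and suppose κ = n·(q^⌈m/2⌉ − 1 − (q−2)·[m odd])/(q^m − 1) is an integer. If δ > κ, then for the defining set Z = C_1 ∪ ⋯ ∪ C_{δ−1} of the narrow-sense BCH code, Z ∩ Z^{-1} ≠ ∅. Specifically: if m is even, then −κ·q^{⌊m/2⌋} ≡ κ (mod n); if m is odd, then s = n·(q^⌈m/2⌉ − q^⌊m/2⌋ − 1)/(q^m − 1) satisfies s < κ and −κ·q^{⌊m/2⌋} ≡ s (mod n). -/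
/-!
For `m = 2a` the integrality of `κ` reads `κ (q^a + 1) = n`, so `κ q^a ≡ -κ (mod n)`. For
`m = 2a + 1` the number `s = n - κ q^a` satisfies `0 < s < κ`, and `κ q^a ≡ -s (mod n)`.
In both cases `κ q^a + w = n` for some `1 ≤ w ≤ κ < δ`: then `w ∈ C_w ⊆ Z` and
`-w ≡ κ q^a ∈ C_κ ⊆ Z`.
-/

open Set

def bchDefiningSet (n q δ : ℕ) : Set ℕ :=
  ⋃ x ∈ Icc 1 (δ - 1), {z : ℕ | ∃ j : ℕ, z = x * q ^ j % n}

theorem mul_pow_mod_mem_bchDefiningSet {n q δ x : ℕ} (hx : x ∈ Icc 1 (δ - 1)) (j : ℕ) :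
    x * q ^ j % n ∈ bchDefiningSet n q δ :=
  mem_biUnion hx ⟨j, rfl⟩

theorem sub_mod_mod_eq_of_add_eq {y w n : ℕ} (h : y + w = n) (hy : 0 < y) :
    (n - y % n) % n = w := by
  subst h
  rcases Nat.eq_zero_or_pos w with rfl | hw
  · simp
  · rw [Nat.mod_eq_of_lt (show y < y + w by omega), Nat.add_sub_cancel_left,
      Nat.mod_eq_of_lt (show w < y + w by omega)]

theorem mem_bchDefiningSet_inter_neg {n q δ κ a w : ℕ} (hq : 0 < q) (h : κ * q ^ a + w = n)
    (hκ : κ ∈ Icc 1 (δ - 1)) (hw : w ∈ Icc 1 (δ - 1)) :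
    w ∈ bchDefiningSet n q δ ∩ (fun z => (n - z % n) % n) '' bchDefiningSet n q δ := by
  have hκq : 0 < κ * q ^ a := Nat.mul_pos hκ.1 (pow_pos hq a)
  refine ⟨?_, κ * q ^ a % n, mul_pow_mod_mem_bchDefiningSet hκ a, ?_⟩
  · simpa [Nat.mod_eq_of_lt (show w < n by omega)] using
      mul_pow_mod_mem_bchDefiningSet hw 0 (n := n)
  · show (n - κ * q ^ a % n % n) % n = w
    rw [Nat.mod_mod, sub_mod_mod_eq_of_add_eq h hκq]

section Integrality

variable {n κ q : ℝ} {a : ℕ}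

theorem mul_pow_add_self_eq_of_eq_div (hq : 1 < q) (ha : a ≠ 0)
    (hκ : κ = n * (q ^ a - 1) / (q ^ (2 * a) - 1)) : κ * q ^ a + κ = n := by
  have hx : 1 < q ^ a := one_lt_pow₀ hq ha
  have hD : q ^ (2 * a) - 1 ≠ 0 := by rw [mul_comm, pow_mul]; nlinarith
  rw [hκ]
  field_simp
  ring

theorem sub_mul_pow_eq_of_eq_div (hq : 1 < q)
    (hκ : κ = n * (q ^ (a + 1) - 1 - (q - 2)) / (q ^ (2 * a + 1) - 1)) :
    n - κ * q ^ a = n * (q ^ (a + 1) - q ^ a - 1) / (q ^ (2 * a + 1) - 1) := by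
  have hD : q ^ (2 * a + 1) - 1 ≠ 0 := (sub_pos.mpr (one_lt_pow₀ hq (by omega))).ne'
  rw [hκ]
  field_simp
  ring

variable (hq : 2 ≤ q) (ha : a ≠ 0) (hn : 0 < n)
  (hκ : κ = n * (q ^ (a + 1) - 1 - (q - 2)) / (q ^ (2 * a + 1) - 1))
include hq ha hn hκ

theorem sub_mul_pow_pos_of_eq_div : 0 < n - κ * q ^ a := by
  have hD : 0 < q ^ (2 * a + 1) - 1 := sub_pos.mpr (one_lt_pow₀ (by linarith) (by omega))
  have hqa : q ≤ q ^ a := le_self_pow₀ (by linarith) ha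
  rw [sub_mul_pow_eq_of_eq_div (by linarith) hκ, pow_succ]
  exact div_pos (mul_pos hn (by nlinarith)) hD

theorem sub_mul_pow_lt_of_eq_div : n - κ * q ^ a < κ := by
  have hD : 0 < q ^ (2 * a + 1) - 1 := sub_pos.mpr (one_lt_pow₀ (by linarith) (by omega))
  have hqa : q ≤ q ^ a := le_self_pow₀ (by linarith) ha
  have hdiff : κ - (n - κ * q ^ a) = n * (q ^ a - q + 2) / (q ^ (2 * a + 1) - 1) := by
    rw [hκ]
    field_simp
    ring
  exact sub_pos.mp (hdiff ▸ div_pos (mul_pos hn (by linarith)) hD)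

end Integrality

theorem exists_add_eq_of_sub_mem_Ioo {n y κ : ℕ} (h : (n : ℝ) - y ∈ Ioo 0 (κ : ℝ)) :
    ∃ w, y + w = n ∧ 0 < w ∧ w < κ := by
  have hyn : y ≤ n := by exact_mod_cast (sub_pos.mp h.1).le
  obtain ⟨w, rfl⟩ := Nat.exists_eq_add_of_le hyn
  push_cast at h
  exact ⟨w, rfl, by exact_mod_cast (by linarith [h.1] : (0 : ℝ) < w),
    by exact_mod_cast (by linarith [h.2] : (w : ℝ) < κ)⟩

theorem bch_euclidean_dual_kappa_integral_general (n q m δ κ : ℕ)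
    (hq : IsPrimePow q) (hn : 0 < n)
    (hm2 : 2 ≤ m)
    (hκ : (κ : ℝ) = (n : ℝ) * ((q : ℝ) ^ ((m + 1) / 2) - 1 -
        ((q : ℝ) - 2) * (if Odd m then 1 else 0)) / ((q : ℝ) ^ m - 1))
    (hδ : κ < δ)
    (Z : Set ℕ)
    (hZ : Z = ⋃ x ∈ Set.Icc 1 (δ - 1), {z : ℕ | ∃ j : ℕ, z = x * q ^ j % n}) :
    (Z ∩ ((fun z => (n - z % n) % n) '' Z)).Nonempty ∧
    (Even m → (κ * q ^ (m / 2) + κ) % n = 0) ∧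
    (Odd m → ∃ s : ℝ,
      s = (n : ℝ) * ((q : ℝ) ^ ((m + 1) / 2) - (q : ℝ) ^ (m / 2) - 1) / ((q : ℝ) ^ m - 1) ∧
      s < κ ∧ ∃ t : ℤ, (κ : ℝ) * (q : ℝ) ^ (m / 2) + s = (t : ℝ) * n) := by
  subst hZ
  have hq2 : (2 : ℝ) ≤ q := by exact_mod_cast hq.two_le
  have hnR : (0 : ℝ) < n := by exact_mod_cast hn
  obtain ⟨a, rfl | rfl⟩ := Nat.even_or_odd' m
  · have ha : a ≠ 0 := by omega
    have hnot : ¬Odd (2 * a) := Nat.not_odd_iff_even.mpr (even_two_mul a)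
    rw [show (2 * a + 1) / 2 = a by omega, if_neg hnot, mul_zero, sub_zero] at hκ
    have hsum : κ * q ^ a + κ = n := by
      exact_mod_cast mul_pow_add_self_eq_of_eq_div (by linarith) ha hκ
    have hκ0 : 0 < κ := Nat.pos_of_ne_zero (by rintro rfl; omega)
    have hκδ : κ ∈ Icc 1 (δ - 1) := ⟨hκ0, by omega⟩
    refine ⟨⟨κ, mem_bchDefiningSet_inter_neg hq.pos hsum hκδ hκδ⟩, fun _ => ?_,
      fun h => absurd h hnot⟩
    rw [show 2 * a / 2 = a by omega, hsum, Nat.mod_self]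
  · have ha : a ≠ 0 := by omega
    simp only [show (2 * a + 1 + 1) / 2 = a + 1 by omega, show (2 * a + 1) / 2 = a by omega,
      if_pos (odd_two_mul_add_one a), mul_one] at hκ ⊢
    have hs0 := sub_mul_pow_pos_of_eq_div hq2 ha hnR hκ
    have hsκ := sub_mul_pow_lt_of_eq_div hq2 ha hnR hκ
    obtain ⟨w, hw, hw0, hwκ⟩ := exists_add_eq_of_sub_mem_Ioo (y := κ * q ^ a) (by
      push_cast; exact ⟨hs0, hsκ⟩)
    have hmem := mem_bchDefiningSet_inter_neg (δ := δ) hq.pos hw ⟨by omega, by omega⟩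
      ⟨hw0, by omega⟩
    refine ⟨⟨w, hmem⟩,
      fun h => absurd h (Nat.not_even_iff_odd.mpr (odd_two_mul_add_one a)),
      fun _ => ⟨_, sub_mul_pow_eq_of_eq_div (by linarith) hκ, hsκ, 1, by push_cast; ring⟩⟩

/-- if `κ = n(q^⌈m/2⌉ − 1 − (q−2)[m odd])/(q^m − 1)` is an integer and
`δ > κ`, then the defining set `Z = C_1 ∪ ⋯ ∪ C_{δ−1}` satisfies `Z ∩ Z⁻¹ ≠ ∅`;
moreover if `m` is even then `−κ·q^⌊m/2⌋ ≡ κ (mod n)`, and if `m` is odd then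
`s = n(q^⌈m/2⌉ − q^⌊m/2⌋ − 1)/(q^m − 1)` satisfies `s < κ` and `−κ·q^⌊m/2⌋ ≡ s (mod n)`. -/
theorem bch_euclidean_dual_kappa_integral (n q m δ κ : ℕ)
    (hq : IsPrimePow q) (hn : 0 < n) (hcop : Nat.Coprime n q)
    (hm : m = orderOf (q : ZMod n)) (hm2 : 2 ≤ m)
    (hκ : (κ : ℝ) = (n : ℝ) * ((q : ℝ) ^ ((m + 1) / 2) - 1 -
        ((q : ℝ) - 2) * (if Odd m then 1 else 0)) / ((q : ℝ) ^ m - 1))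
    (hδ : κ < δ)
    (Z : Set ℕ)
    (hZ : Z = ⋃ x ∈ Set.Icc 1 (δ - 1), {z : ℕ | ∃ j : ℕ, z = x * q ^ j % n}) :
    (Z ∩ ((fun z => (n - z % n) % n) '' Z)).Nonempty ∧
    (Even m → (κ * q ^ (m / 2) + κ) % n = 0) ∧
    (Odd m → ∃ s : ℝ,
      s = (n : ℝ) * ((q : ℝ) ^ ((m + 1) / 2) - (q : ℝ) ^ (m / 2) - 1) / ((q : ℝ) ^ m - 1) ∧
      s < κ ∧ ∃ t : ℤ, (κ : ℝ) * (q : ℝ) ^ (m / 2) + s = (t : ℝ) * n) :=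
  bch_euclidean_dual_kappa_integral_general n q m δ κ hq hn hm2 hκ hδ Z hZ
end

section
/- Let q be a prime power, m ≥ 2, and n = q^m − 1. The narrow-sense primitive BCH code of length n over F_q with designed distance δ contains its Euclidean dual code if and only if 2 ≤ δ ≤ q^⌈m/2⌉ − 1 − (q−2)·[m odd]. Equivalently, with Z = C_1 ∪ ⋯ ∪ C_{δ−1} the union of q-ary cyclotomic cosets modulo q^m − 1, one has Z ∩ (−Z mod n) = ∅ if and only if δ ≤ q^⌈m/2⌉ − 1 − (q−2)·[m odd]. -/
private lemma aux_not_dvd (n s : ℕ) (h1 : 0 < s) (h2 : s < n) : ¬ (n ∣ s) :=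
  fun hd => absurd (Nat.le_of_dvd h1 hd) (by omega)

private lemma pow_mod_red (q m n : ℕ) (hm : 0 < m) (hq : 1 ≤ q) (hn : n = q ^ m - 1) :
    ∀ a, q ^ a ≡ q ^ (a % m) [MOD n] := by
  have hqm : q ^ m = n + 1 := by
    have h1 : 1 ≤ q ^ m := Nat.one_le_pow _ _ hq
    omega
  have h1 : q ^ m ≡ 1 [MOD n] := by
    show q ^ m % n = 1 % n
    rw [hqm]; exact Nat.add_mod_left n 1
  intro a
  calc q ^ a = (q ^ m) ^ (a / m) * q ^ (a % m) := by
        rw [← pow_mul, ← pow_add, Nat.div_add_mod]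
    _ ≡ 1 ^ (a / m) * q ^ (a % m) [MOD n] := ((h1.pow _).mul_right _)
    _ = q ^ (a % m) := by rw [one_pow, one_mul]

private lemma reduce_exp (q m n x y i j : ℕ) (hm : 0 < m) (hq : 1 ≤ q) (hn : n = q ^ m - 1)
    (hd : n ∣ x * q ^ i + y * q ^ j) :
    ∃ e ≤ m / 2, n ∣ x + y * q ^ e ∨ n ∣ y + x * q ^ e := by
  have pr := pow_mod_red q m n hm hq hn
  have hexp : i + (m - 1) * i = m * i := by
    obtain ⟨k, rfl⟩ : ∃ k, m = k + 1 := ⟨m - 1, by omega⟩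
    simp [Nat.add_mul, Nat.add_sub_cancel]
    ring
  have hd2 : n ∣ x * q ^ (m * i) + y * q ^ (j + (m - 1) * i) := by
    have h := hd.mul_right (q ^ ((m - 1) * i))
    have : (x * q ^ i + y * q ^ j) * q ^ ((m - 1) * i)
        = x * q ^ (m * i) + y * q ^ (j + (m - 1) * i) := by
      rw [add_mul, mul_assoc, ← pow_add, mul_assoc, ← pow_add, hexp]
    rwa [this] at h
  set e0 := (j + (m - 1) * i) % m with he0
  have h3 : x * q ^ (m * i) + y * q ^ (j + (m - 1) * i)
      ≡ x * q ^ (m * i % m) + y * q ^ e0 [MOD n] :=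
    ((pr _).mul_left x).add ((pr _).mul_left y)
  have hB : n ∣ x + y * q ^ e0 := by
    have hA0 : x * q ^ (m * i) + y * q ^ (j + (m - 1) * i) ≡ 0 [MOD n] :=
      Nat.modEq_zero_iff_dvd.mpr hd2
    have hB0 := (h3.symm.trans hA0)
    have := Nat.modEq_zero_iff_dvd.mp hB0
    simpa [Nat.mul_mod_right] using this
  have he0lt : e0 < m := Nat.mod_lt _ hm
  by_cases hc : e0 ≤ m / 2
  · exact ⟨e0, hc, Or.inl hB⟩
  · refine ⟨m - e0, by omega, Or.inr ?_⟩
    have hd3 : n ∣ x * q ^ (m - e0) + y * q ^ m := by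
      have h := hB.mul_right (q ^ (m - e0))
      have : (x + y * q ^ e0) * q ^ (m - e0)
          = x * q ^ (m - e0) + y * q ^ m := by
        rw [add_mul, mul_assoc, ← pow_add, Nat.add_sub_cancel' (le_of_lt he0lt)]
      rwa [this] at h
    have h4 : x * q ^ (m - e0) + y * q ^ m
        ≡ x * q ^ (m - e0) + y * q ^ (m % m) [MOD n] :=
      (Nat.ModEq.refl _).add ((pr m).mul_left y)
    have hA0 : x * q ^ (m - e0) + y * q ^ m ≡ 0 [MOD n] :=
      Nat.modEq_zero_iff_dvd.mpr hd3
    have := Nat.modEq_zero_iff_dvd.mp (h4.symm.trans hA0)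
    simp only [Nat.mod_self, pow_zero, mul_one] at this
    rwa [add_comm] at this

private lemma not_dvd_even (q h x y e : ℕ) (hq : 2 ≤ q) (hh : 1 ≤ h)
    (hx1 : 1 ≤ x) (hx : x + 2 ≤ q ^ h) (hy : y + 2 ≤ q ^ h) (he : e ≤ h) :
    ¬ (q ^ (h + h) - 1 ∣ x + y * q ^ e) := by
  intro hd
  have hqe : q ^ e ≤ q ^ h := Nat.pow_le_pow_right (by omega) he
  have h2h : q ^ (h + h) = q ^ h * q ^ h := pow_add q h h
  have h1 : y * q ^ e ≤ y * q ^ h := Nat.mul_le_mul_left y hqe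
  have h2 : (y + 2) * q ^ h ≤ q ^ h * q ^ h := Nat.mul_le_mul_right _ hy
  have key : x + y * q ^ e + 2 ≤ q ^ h * q ^ h := by nlinarith
  exact absurd (Nat.le_of_dvd (by omega) hd) (by omega)

private lemma not_dvd_odd (q h x y e : ℕ) (hq : 2 ≤ q) (hh : 1 ≤ h)
    (hx1 : 1 ≤ x) (hx : x + q ≤ q ^ (h + 1)) (hy : y + q ≤ q ^ (h + 1)) (he : e ≤ h) :
    ¬ (q ^ (h + h + 1) - 1 ∣ x + y * q ^ e) := by
  intro hd
  have hqe : q ^ e ≤ q ^ h := Nat.pow_le_pow_right (by omega) he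
  have hP : 1 ≤ q ^ h := Nat.one_le_pow _ _ (by omega)
  have hqq : q ^ (h + 1) = q * q ^ h := by rw [pow_succ]; ring
  have h2h : q ^ (h + h + 1) = q * q ^ h * q ^ h := by
    rw [pow_succ, pow_add]; ring
  have h1 : y * q ^ e ≤ y * q ^ h := Nat.mul_le_mul_left y hqe
  have h2 : (y + q) * q ^ h ≤ (q * q ^ h) * q ^ h := Nat.mul_le_mul_right _ (by omega)
  have key : x + y * q ^ e + 2 ≤ q * q ^ h * q ^ h := by nlinarith
  exact absurd (Nat.le_of_dvd (by omega) hd) (by omega)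

private lemma dvd_of_mem_pair (n a b : ℕ) (hn : 0 < n) (h : (n - b % n % n) % n = a % n) :
    n ∣ a + b := by
  have hb : b % n < n := Nat.mod_lt _ hn
  have hbb : b % n % n = b % n := Nat.mod_eq_of_lt hb
  rw [hbb] at h
  rw [Nat.dvd_iff_mod_eq_zero, Nat.add_mod, ← h]
  rcases Nat.eq_zero_or_pos (b % n) with h0 | h0
  · rw [h0]; simp
  · have h2 : (n - b % n) % n = n - b % n := Nat.mod_eq_of_lt (by omega)
    rw [h2, Nat.sub_add_cancel (by omega), Nat.mod_self]

private lemma inter_nonempty (n q δ : ℕ) (Z : Set ℕ)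
    (hZ : Z = ⋃ x ∈ Set.Icc 1 (δ - 1), {z : ℕ | ∃ j : ℕ, z = x * q ^ j % n})
    (x y e : ℕ) (hq : 1 ≤ q) (hx1 : 1 ≤ x) (hx2 : x ≤ δ - 1) (hy1 : 1 ≤ y) (hy2 : y ≤ δ - 1)
    (hsum : x + y * q ^ e = n) :
    (Z ∩ ((fun z => (n - z % n) % n) '' Z)).Nonempty := by
  have hqe : 1 ≤ q ^ e := Nat.one_le_pow _ _ (by omega)
  have hylt : 1 ≤ y * q ^ e := le_trans hy1 (Nat.le_mul_of_pos_right y hqe)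
  have hxn : x < n := by omega
  have h1 : y * q ^ e < n := by omega
  refine ⟨x, ?_, ?_⟩
  · rw [hZ]; simp only [Set.mem_iUnion, Set.mem_setOf_eq, Set.mem_Icc, exists_prop]
    exact ⟨x, ⟨hx1, hx2⟩, 0, by simp [Nat.mod_eq_of_lt hxn]⟩
  · refine ⟨y * q ^ e % n, ?_, ?_⟩
    · rw [hZ]; simp only [Set.mem_iUnion, Set.mem_setOf_eq, Set.mem_Icc, exists_prop]
      exact ⟨y, ⟨hy1, hy2⟩, e, rfl⟩
    · show (n - (y * q ^ e % n) % n) % n = x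
      rw [Nat.mod_eq_of_lt h1, Nat.mod_eq_of_lt h1]
      have h2 : n - y * q ^ e = x := by omega
      rw [h2, Nat.mod_eq_of_lt hxn]

/-- a narrow-sense primitive BCH code of length `n = q^m − 1` (`m ≥ 2`)
contains its Euclidean dual iff `2 ≤ δ ≤ q^⌈m/2⌉ − 1 − (q−2)[m odd]`; equivalently,
with `Z = C_1 ∪ ⋯ ∪ C_{δ−1}`, `Z ∩ Z⁻¹ = ∅ ↔ δ ≤ q^⌈m/2⌉ − 1 − (q−2)[m odd]`. -/
theorem primitive_bch_euclidean_dual_iff (n q m δ : ℕ)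
    (hq : IsPrimePow q) (hm2 : 2 ≤ m) (hn : n = q ^ m - 1)
    (hδ2 : 2 ≤ δ)
    (Z : Set ℕ)
    (hZ : Z = ⋃ x ∈ Set.Icc 1 (δ - 1), {z : ℕ | ∃ j : ℕ, z = x * q ^ j % n}) :
    Z ∩ ((fun z => (n - z % n) % n) '' Z) = ∅ ↔
      δ ≤ q ^ ((m + 1) / 2) - 1 - (q - 2) * (if Odd m then 1 else 0) := by
  have hq2 : 2 ≤ q := hq.two_le
  have hq1 : 1 ≤ q := by omega
  have hqm : 4 ≤ q ^ m := le_trans (by nlinarith : 4 ≤ q ^ 2) (Nat.pow_le_pow_right hq1 hm2)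
  have hn2 : 2 ≤ n := by omega
  rcases Nat.even_or_odd m with ⟨h, hm⟩ | ⟨h, hm⟩
  · -- m = h + h (even)
    subst hm
    have hh1 : 1 ≤ h := by omega
    have hodd : ¬ Odd (h + h) := by
      rintro ⟨k, hk⟩; omega
    rw [if_neg hodd, mul_zero, Nat.sub_zero]
    have hdiv : (h + h + 1) / 2 = h := by omega
    rw [hdiv]
    have hqh : q ≤ q ^ h := Nat.le_self_pow (by omega) q
    have hQ2 : 2 ≤ q ^ h := by omega
    have hpow : q ^ (h + h) = q ^ h * q ^ h := pow_add q h h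
    constructor
    · intro hemp
      by_contra hgt
      push_neg at hgt
      have hkey : (q ^ h - 1) + (q ^ h - 1) * q ^ h = n := by
        rw [hn]
        apply Nat.eq_sub_of_add_eq
        zify [hQ2, hq1, (by omega : 1 ≤ q ^ h)]
        ring
      have hne := inter_nonempty n q δ Z hZ (q ^ h - 1) (q ^ h - 1) h hq1
        (by omega) (by omega) (by omega) (by omega) hkey
      rw [hemp] at hne
      exact Set.not_nonempty_empty hne
    · intro hle
      rw [Set.eq_empty_iff_forall_notMem]
      rintro z ⟨hz1, w, hw1, hw2⟩
      rw [hZ] at hz1 hw1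
      simp only [Set.mem_iUnion, Set.mem_setOf_eq, Set.mem_Icc, exists_prop] at hz1 hw1
      obtain ⟨x, ⟨hx1, hx2⟩, i, hzx⟩ := hz1
      obtain ⟨y, ⟨hy1, hy2⟩, j, hwy⟩ := hw1
      have hdvd : n ∣ x * q ^ i + y * q ^ j := by
        apply dvd_of_mem_pair n _ _ (by omega)
        have := hw2
        simp only at this
        rw [hwy, hzx] at this
        exact this
      obtain ⟨e, hee, hcase⟩ := reduce_exp q (h + h) n x y i j (by omega) hq1 hn hdvd
      have hee' : e ≤ h := by omega
      rcases hcase with hc | hc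
      · exact not_dvd_even q h x y e hq2 hh1 hx1 (by omega) (by omega) hee' (hn ▸ hc)
      · exact not_dvd_even q h y x e hq2 hh1 hy1 (by omega) (by omega) hee' (hn ▸ hc)
  · -- m = 2h+1 (odd)
    subst hm
    have hh1 : 1 ≤ h := by omega
    have hodd : Odd (2 * h + 1) := ⟨h, by ring⟩
    rw [if_pos hodd, mul_one]
    have hdiv : (2 * h + 1 + 1) / 2 = h + 1 := by omega
    rw [hdiv]
    have hqh : q ≤ q ^ h := Nat.le_self_pow (by omega) q
    have hQ2 : 2 ≤ q ^ h := by omega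
    have hqh1 : q ^ (h + 1) = q * q ^ h := by rw [pow_succ]; ring
    have h2qh : 2 * q ^ h ≤ q ^ (h + 1) := by
      rw [hqh1]; exact Nat.mul_le_mul_right _ hq2
    have hqle : q ≤ q ^ (h + 1) := Nat.le_self_pow (by omega) q
    have hqhle : q ^ h ≤ q ^ (h + 1) := Nat.pow_le_pow_right hq1 (by omega)
    constructor
    · intro hemp
      by_contra hgt
      push_neg at hgt
      have hkey : (q ^ (h + 1) - q ^ h - 1) + (q ^ (h + 1) - q + 1) * q ^ h = n := by
        rw [hn]
        apply Nat.eq_sub_of_add_eq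
        zify [hqhle, hqle, (by omega : 1 ≤ q ^ (h + 1) - q ^ h)]
        ring
      have hne := inter_nonempty n q δ Z hZ (q ^ (h + 1) - q ^ h - 1) (q ^ (h + 1) - q + 1) h hq1
        (by omega) (by omega) (by omega) (by omega) hkey
      rw [hemp] at hne
      exact Set.not_nonempty_empty hne
    · intro hle
      rw [Set.eq_empty_iff_forall_notMem]
      rintro z ⟨hz1, w, hw1, hw2⟩
      rw [hZ] at hz1 hw1
      simp only [Set.mem_iUnion, Set.mem_setOf_eq, Set.mem_Icc, exists_prop] at hz1 hw1
      obtain ⟨x, ⟨hx1, hx2⟩, i, hzx⟩ := hz1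
      obtain ⟨y, ⟨hy1, hy2⟩, j, hwy⟩ := hw1
      have hdvd : n ∣ x * q ^ i + y * q ^ j := by
        apply dvd_of_mem_pair n _ _ (by omega)
        have := hw2
        simp only at this
        rw [hwy, hzx] at this
        exact this
      obtain ⟨e, hee, hcase⟩ := reduce_exp q (2 * h + 1) n x y i j (by omega) hq1 hn hdvd
      have hee' : e ≤ h := by omega
      have hn' : n = q ^ (h + h + 1) - 1 := by rw [hn]; ring_nf
      rcases hcase with hc | hc
      · exact not_dvd_odd q h x y e hq2 hh1 hx1 (by omega) (by omega) hee' (hn' ▸ hc)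
      · exact not_dvd_odd q h y x e hq2 hh1 hy1 (by omega) (by omega) hee' (hn' ▸ hc)
end

section
/- Let q be a prime power, m > 1 even, and n = q^m − 1. Let Z = C_b ∪ C_{b+1} ∪ ⋯ ∪ C_{b+δ−2} be a union of consecutive q-ary cyclotomic cosets modulo n with δ > q^{m/2} − 1. Then Z ∩ Z^{-1} ≠ ∅, where Z^{-1} = { −z mod n : z ∈ Z }. In particular, there is an element of the form s = α(q^{m/2} − 1) in Z satisfying −s·q^{m/2} ≡ s (mod n). -/
/-- for `m > 1` even, `n = q^m − 1`, and
`Z = C_b ∪ ⋯ ∪ C_{b+δ−2}` with `δ > q^{m/2} − 1`, one has `Z ∩ Z⁻¹ ≠ ∅`;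
in particular some `s = α(q^{m/2} − 1)` lies in `Z` and satisfies
`−s·q^{m/2} ≡ s (mod n)`. -/
theorem primitive_bch_nonnarrow_euclidean_even (n q m b δ : ℕ)
    (hq : IsPrimePow q) (hm1 : 1 < m) (hmeven : Even m) (hn : n = q ^ m - 1)
    (hδ : q ^ (m / 2) - 1 < δ)
    (Z : Set ℕ)
    (hZ : Z = ⋃ x ∈ Set.Icc b (b + δ - 2), {z : ℕ | ∃ j : ℕ, z = x * q ^ j % n}) :
    (Z ∩ ((fun z => (n - z % n) % n) '' Z)).Nonempty ∧
    ∃ α : ℕ, α * (q ^ (m / 2) - 1) ∈ Z ∧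
      n ∣ α * (q ^ (m / 2) - 1) * q ^ (m / 2) + α * (q ^ (m / 2) - 1) := by
  have hq2 : 2 ≤ q := hq.two_le
  have hm2 : m % 2 = 0 := Nat.even_iff.mp hmeven
  set Q := q ^ (m / 2) with hQ
  have hQ2 : 2 ≤ Q := le_trans hq2 (Nat.le_self_pow (by omega) q)
  set d := Q - 1 with hd
  have hdQ : d + 1 = Q := by omega
  have hqm : 1 ≤ q ^ m := Nat.one_le_pow _ _ (by omega)
  have hQQ : Q * Q = q ^ m := by rw [hQ, ← pow_add]; congr 1; omega
  have hn1 : n + 1 = Q * Q := by rw [hQQ, hn]; omega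
  have hnd : n = d * (Q + 1) := by
    have h : d * (Q + 1) + 1 = Q * Q := by rw [← hdQ]; ring
    omega
  have hd1 : 1 ≤ d := by omega
  have hn0 : 0 < n := by nlinarith
  -- choose the first multiple of d at or above b
  set s0 := d * ((b + d - 1) / d) with hs0def
  have h1 : s0 + (b + d - 1) % d = b + d - 1 := Nat.div_add_mod _ _
  have h2 : (b + d - 1) % d < d := Nat.mod_lt _ (by omega)
  have hbs0 : b ≤ s0 := by omega
  have hs0b : s0 ≤ b + d - 1 := by omega
  have hIcc : s0 ∈ Set.Icc b (b + δ - 2) := Set.mem_Icc.mpr ⟨hbs0, by omega⟩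
  set s := s0 % n with hsdef
  have hs_lt : s < n := Nat.mod_lt _ hn0
  have hds : d ∣ s := by
    rw [hsdef]
    exact (Nat.dvd_mod_iff ⟨Q + 1, hnd⟩).mpr ⟨_, rfl⟩
  obtain ⟨α, hα⟩ := hds
  have hsZ : s ∈ Z := by
    rw [hZ]
    refine Set.mem_biUnion hIcc ⟨0, ?_⟩
    simp [hsdef]
  have hdvd : n ∣ s * Q + s := ⟨α, by rw [hα, hnd]; ring⟩
  set w := s * Q % n with hwdef
  have hw_lt : w < n := Nat.mod_lt _ hn0
  have hwZ : w ∈ Z := by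
    rw [hZ]
    refine Set.mem_biUnion hIcc ⟨m / 2, ?_⟩
    rw [hwdef, hsdef, ← hQ, Nat.mod_mul_mod]
  have hsn : s % n = s := Nat.mod_eq_of_lt hs_lt
  have h3 : (w + s) % n = 0 := by
    have h4 := Nat.add_mod (s * Q) s n
    rw [hsn] at h4
    rw [hwdef, ← h4]
    exact Nat.mod_eq_zero_of_dvd hdvd
  have h5 : w + s = 0 ∨ w + s = n := by
    rcases Nat.lt_or_ge (w + s) n with h | h
    · left; rwa [Nat.mod_eq_of_lt h] at h3
    · right
      rw [Nat.mod_eq_sub_mod h, Nat.mod_eq_of_lt (by omega)] at h3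
      omega
  have himg : (n - w % n) % n = s := by
    rw [Nat.mod_eq_of_lt hw_lt]
    rcases h5 with h | h
    · have hw0 : w = 0 := by omega
      have hs0' : s = 0 := by omega
      rw [hw0, hs0', Nat.sub_zero, Nat.mod_self]
    · have : n - w = s := by omega
      rw [this, hsn]
  refine ⟨⟨s, hsZ, ⟨w, hwZ, himg⟩⟩, α, ?_, ?_⟩
  · rw [mul_comm α d, ← hα]; exact hsZ
  · rw [mul_comm α d, ← hα]; exact hdvd
end

section
/- Let q be a prime power, m > 1 odd, and n = q^m − 1. Let Z = C_b ∪ ⋯ ∪ C_{b+δ−2} be a union of consecutive q-ary cyclotomic cosets modulo n with 0 ∉ Z and δ > 2(q^{(m+1)/2} − q + 1). Then Z ∩ Z^{-1} ≠ ∅, where Z^{-1} = { −z mod n : z ∈ Z }. Hence a primitive BCH code over F_q of length q^m − 1 with such designed distance cannot contain its Euclidean dual. -/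
lemma ap_hits (n d c A L : ℕ) (hd : 0 < d) (hn : 0 < n) (hc : c + d ≤ n)
    (hLd : n ≤ L * d) :
    ∃ i e, i ≤ L ∧ e < d ∧ (A + i * d) % n = c + e := by
  obtain ⟨u, hu1, hu2, humod⟩ : ∃ u, u ≤ A + n - 1 - c ∧ A + n - 1 - c < u + n ∧
      ∀ x, x < n → (u + x) % n = x :=
    ⟨(A + n - 1 - c) / n * n, Nat.div_mul_le_self _ _, Nat.lt_div_mul_add hn,
      fun x hx => by rw [Nat.mul_add_mod', Nat.mod_eq_of_lt hx]⟩
  obtain ⟨i, v, hv, hv1, hv2⟩ : ∃ i v, v = i * d ∧ v ≤ u + c - A + d - 1 ∧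
      u + c - A + d - 1 < v + d :=
    ⟨(u + c - A + d - 1) / d, _, rfl, Nat.div_mul_le_self _ _, Nat.lt_div_mul_add hd⟩
  have hAT : A ≤ u + c := by omega
  refine ⟨i, A + v - (u + c), ?_, by omega, ?_⟩
  · by_contra h
    push_neg at h
    have h' : (L + 1) * d ≤ i * d := Nat.mul_le_mul_right d h
    have hLd2 : (L + 1) * d = L * d + d := by ring
    omega
  · have h2 : A + i * d = u + (c + (A + v - (u + c))) := by omega
    rw [h2, humod _ (by omega)]


/-- for `m > 1` odd, `n = q^m − 1`, `Z = C_b ∪ ⋯ ∪ C_{b+δ−2}` with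
`0 ∉ Z` and `δ > 2(q^{(m+1)/2} − q + 1)`, one has `Z ∩ Z⁻¹ ≠ ∅`; hence such a
primitive BCH code cannot contain its Euclidean dual. -/
theorem primitive_bch_nonnarrow_euclidean_odd (n q m b δ : ℕ)
    (hq : IsPrimePow q) (hm1 : 1 < m) (hmodd : Odd m) (hn : n = q ^ m - 1)
    (hδ : 2 * (q ^ ((m + 1) / 2) - q + 1) < δ)
    (Z : Set ℕ)
    (hZ : Z = ⋃ x ∈ Set.Icc b (b + δ - 2), {z : ℕ | ∃ j : ℕ, z = x * q ^ j % n})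
    (h0 : 0 ∉ Z) :
    (Z ∩ ((fun z => (n - z % n) % n) '' Z)).Nonempty := by
  have hq2 : 2 ≤ q := hq.two_le
  obtain ⟨t, ht⟩ := hmodd
  have ht1 : 1 ≤ t := by omega
  have hs : (m + 1) / 2 = t + 1 := by omega
  rw [hs] at hδ
  have hmem : ∀ z, z ∈ Z ↔ ∃ x, (b ≤ x ∧ x ≤ b + δ - 2) ∧ ∃ j, z = x * q ^ j % n := by
    intro z; rw [hZ]
    simp only [Set.mem_iUnion, Set.mem_setOf_eq, Set.mem_Icc, exists_prop]
  set s := t + 1 with hsdef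
  set P := q ^ s with hP
  have hqP : q ≤ P := Nat.le_self_pow (by omega) q
  have hqqP : q * q ≤ P := by
    calc q * q = q ^ 2 := by ring
    _ ≤ q ^ s := Nat.pow_le_pow_right (by omega) (by omega)
  have h2qP : 2 * q ≤ P := le_trans (Nat.mul_le_mul_right q hq2) hqqP
  have hQ4 : 4 ≤ q ^ m := by
    calc (4 : ℕ) = 2 ^ 2 := rfl
    _ ≤ q ^ 2 := Nat.pow_le_pow_left hq2 2
    _ ≤ q ^ m := Nat.pow_le_pow_right (by omega) (by omega)
  have hn1 : n + 1 = q ^ m := by omega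
  have hn0 : 0 < n := by omega
  have hP0 : 0 < P := by omega
  have hδ3 : 2 * P - 2 * q + 2 < δ := by omega
  set L := δ - 1 with hL
  have hL2 : 2 ≤ L := by omega
  have hbmod : n * (b / n) + b % n = b := Nat.div_add_mod b n
  set r := b % n with hr
  set k0 := b / n with hk0
  have hrn : r < n := Nat.mod_lt b hn0
  have hr1 : 1 ≤ r := by
    rcases Nat.eq_zero_or_pos r with h | h
    · exfalso
      exact h0 ((hmem 0).mpr ⟨b, ⟨le_refl b, by omega⟩, 0, by simp [← hr, h]⟩)
    · exact h
  have hrL : r + L ≤ n := by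
    by_contra h
    push_neg at h
    apply h0
    refine (hmem 0).mpr ⟨b + (n - r), ⟨by omega, by omega⟩, 0, ?_⟩
    have hy : b + (n - r) = n * (k0 + 1) := by
      have hexp : n * (k0 + 1) = n * k0 + n := by ring
      omega
    simp [hy, Nat.mul_mod_right]
  set c := n + 1 - r - L with hc
  -- key inequality : n ≤ (L - 2) * P
  have hqsP : q * P ≤ q ^ m := by
    rw [hP, ← pow_succ']
    exact Nat.pow_le_pow_right (by omega) (by omega)
  have hPP : P * P = q * q ^ m := by
    rw [hP, ← pow_add]
    have h1 : s + s = m + 1 := by omega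
    rw [h1, pow_succ, Nat.mul_comm]
  have h1 : 2 * q ^ m ≤ P * P := by
    rw [hPP]; exact Nat.mul_le_mul_right _ hq2
  have hkey : n ≤ (L - 2) * P := by
    have h2 : 2 * (P - q) ≤ L - 2 := by omega
    calc n ≤ 2 * (P * P - q * P) := by omega
    _ = 2 * ((P - q) * P) := by rw [Nat.sub_mul]
    _ = 2 * (P - q) * P := by ring
    _ ≤ (L - 2) * P := Nat.mul_le_mul_right _ h2
  have hPL : P ≤ L := by omega
  have hLd : n ≤ (L - 1) * P :=
    le_trans hkey (Nat.mul_le_mul_right _ (by omega))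
  obtain ⟨i, e, hiL, hed, hmod⟩ := ap_hits n P c (b * P) (L - 1) hP0 hn0 (by omega) hLd
  -- v := c + e, x := b + i
  have hxP : (b + i) * P = b * P + i * P := by ring
  have hvZ : c + e ∈ Z := by
    refine (hmem _).mpr ⟨b + i, ⟨by omega, by omega⟩, s, ?_⟩
    rw [← hP, hxP]
    exact hmod.symm
  have hvub : c + e ≤ n - r := by omega
  have hymod : (b + (n - r - (c + e))) % n = n - (c + e) := by
    have hy : b + (n - r - (c + e)) = n * k0 + (n - (c + e)) := by omega
    rw [hy, Nat.mul_add_mod, Nat.mod_eq_of_lt (by omega)]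
  have hyZ : (b + (n - r - (c + e))) % n ∈ Z := by
    refine (hmem _).mpr ⟨b + (n - r - (c + e)), ⟨by omega, by omega⟩, 0, ?_⟩
    simp
  refine ⟨c + e, hvZ, ⟨(b + (n - r - (c + e))) % n, hyZ, ?_⟩⟩
  show (n - ((b + (n - r - (c + e))) % n) % n) % n = c + e
  rw [hymod, Nat.mod_eq_of_lt (show n - (c + e) < n by omega)]
  have h3 : n - (n - (c + e)) = c + e := by omega
  rw [h3, Nat.mod_eq_of_lt (by omega)]
end

section
/- Let q be a prime power, n a positive integer with gcd(n,q)=1 and m = ord_n(q), and suppose q^⌊m/2⌋ < n ≤ q^m − 1. For designed distance δ with 2 ≤ δ ≤ min{⌊n·q^⌈m/2⌉/(q^m−1)⌋, n}, the narrow-sense BCH code BCH(n,q;δ) has dimension exactly k = n − m·⌈(δ−1)(1 − 1/q)⌉. Equivalently, the defining set Z = C_1 ∪ ⋯ ∪ C_{δ−1} has cardinality |Z| = m·⌈(δ−1)(1 − 1/q)⌉. -/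
open Classical in

/-- for `2 ≤ δ ≤ min{⌊n·q^⌈m/2⌉/(q^m−1)⌋, n}`, the narrow-sense BCH
code `BCH(n,q;δ)` has dimension `n − m·⌈(δ−1)(1−1/q)⌉`; equivalently its defining
set `Z = C_1 ∪ ⋯ ∪ C_{δ−1}` has cardinality `m·⌈(δ−1)(1−1/q)⌉ = m·((δ−1) − ⌊(δ−1)/q⌋)`. -/
theorem bch_dimension (n q m δ : ℕ)
    (hq : IsPrimePow q) (hn : 0 < n) (hcop : Nat.Coprime n q)
    (hm : m = orderOf (q : ZMod n))
    (hlow : q ^ (m / 2) < n) (hhigh : n ≤ q ^ m - 1)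
    (hδ2 : 2 ≤ δ)
    (hδmax : δ ≤ min (n * q ^ ((m + 1) / 2) / (q ^ m - 1)) n) :
    ((Finset.range n).filter (fun z =>
        ∃ x ∈ Finset.Icc 1 (δ - 1), ∃ j ∈ Finset.range m, z = x * q ^ j % n)).card
      = m * ((δ - 1) - (δ - 1) / q) := by
  rcases Nat.eq_zero_or_pos m with hm0 | hmpos
  · subst hm0
    simp
  have hq2 : 2 ≤ q := hq.two_le
  have hδn : δ ≤ n := le_trans hδmax (min_le_right _ _)
  have hqm1 : 2 ≤ q ^ m := le_trans hq2 (Nat.le_self_pow (by omega) q)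
  -- the numeric key bound
  set c : ℕ := (m + 1) / 2 with hc
  have hcm : c ≤ m := by omega
  have hδb : δ * (q ^ m - 1) ≤ n * q ^ c := by
    have h1 : δ ≤ n * q ^ c / (q ^ m - 1) := le_trans hδmax (min_le_left _ _)
    exact (Nat.le_div_iff_mul_le (by omega)).mp h1
  have hkey : ∀ x j, x ≤ δ - 1 → j ≤ m / 2 → x * q ^ j ≤ n := by
    intro x j hx hj
    have h1 : (x + 1) * (q ^ m - 1) ≤ n * q ^ c :=
      le_trans (Nat.mul_le_mul_right _ (by omega)) hδb
    have h2 : q ^ j ≤ q ^ (m - c) :=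
      Nat.pow_le_pow_right (by omega) (by omega)
    have h3 : q ^ c * q ^ (m - c) = q ^ m := by
      rw [← pow_add]; congr 1; omega
    have hp : 1 ≤ q ^ (m - c) := Nat.one_le_pow _ _ (by omega)
    have h4 : n ≤ (q ^ m - 1) * q ^ (m - c) :=
      le_trans (by omega) (Nat.le_mul_of_pos_right _ (by omega))
    -- multiply h1 by q^(m-c)
    have h5 : (x + 1) * (q ^ m - 1) * q ^ (m - c) ≤ n * q ^ m := by
      calc (x + 1) * (q ^ m - 1) * q ^ (m - c) ≤ n * q ^ c * q ^ (m - c) :=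
            Nat.mul_le_mul_right _ h1
        _ = n * q ^ m := by rw [mul_assoc, h3]
    have h6 : x * (q ^ m - 1) * q ^ (m - c) + n ≤ n * q ^ m := by
      have : x * (q ^ m - 1) * q ^ (m - c) + (q ^ m - 1) * q ^ (m - c)
          = (x + 1) * (q ^ m - 1) * q ^ (m - c) := by ring
      omega
    have h7 : x * q ^ (m - c) * (q ^ m - 1) ≤ n * (q ^ m - 1) := by
      have hexp : n * q ^ m = n * (q ^ m - 1) + n := by
        have : 1 ≤ q ^ m := by omega
        rw [Nat.mul_sub_one]
        omega
      nlinarith [h6]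
    have h8 : x * q ^ j * (q ^ m - 1) ≤ x * q ^ (m - c) * (q ^ m - 1) := by
      have := Nat.mul_le_mul_left x h2
      exact Nat.mul_le_mul_right _ this
    exact Nat.le_of_mul_le_mul_right (le_trans h8 h7) (by omega)
  -- q^m ≡ 1 mod n
  have hqm : q ^ m ≡ 1 [MOD n] := by
    have h1 : ((q ^ m : ℕ) : ZMod n) = ((1 : ℕ) : ZMod n) := by
      push_cast
      rw [hm]
      exact pow_orderOf_eq_one _
    exact (ZMod.natCast_eq_natCast_iff _ _ _).mp h1
  -- congruence of bounded elements is equality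
  have hmod : ∀ a b : ℕ, 1 ≤ a → a < n → b ≤ n → a ≡ b [MOD n] → a = b := by
    intro a b ha han hbn h
    have h1 : a % n = b % n := h
    rw [Nat.mod_eq_of_lt han] at h1
    rcases lt_or_eq_of_le hbn with hb | hb
    · rw [Nat.mod_eq_of_lt hb] at h1; exact h1
    · subst hb; simp at h1; omega
  classical
  set D : Finset ℕ := (Finset.Ioc 0 (δ - 1)).filter (fun x => ¬ q ∣ x) with hD
  set T : Finset (ℕ × ℕ) := D ×ˢ Finset.range m with hT
  set f : ℕ × ℕ → ℕ := fun p => p.1 * q ^ p.2 % n with hf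
  have hDmem : ∀ x ∈ D, 1 ≤ x ∧ x ≤ δ - 1 ∧ ¬ q ∣ x := by
    intro x hx
    rw [hD, Finset.mem_filter, Finset.mem_Ioc] at hx
    exact ⟨hx.1.1, hx.1.2, hx.2⟩
  -- main injectivity-type lemma (for j ≤ i)
  have inj2 : ∀ x ∈ D, ∀ y ∈ D, ∀ j, j < m → ∀ i, i < m → j ≤ i →
      x * q ^ j % n = y * q ^ i % n → x = y ∧ j = i := by
    intro x hx y hy j hj i hi hji heq
    obtain ⟨hx1, hx2, hx3⟩ := hDmem x hx
    obtain ⟨hy1, hy2, hy3⟩ := hDmem y hy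
    set d : ℕ := i - j with hd
    have hid : i = j + d := by omega
    have h1 : x * q ^ j ≡ y * q ^ d * q ^ j [MOD n] := by
      have : y * q ^ i = y * q ^ d * q ^ j := by rw [hid, pow_add]; ring
      rw [← this]; exact heq
    have h2 : x ≡ y * q ^ d [MOD n] :=
      Nat.ModEq.cancel_right_of_coprime (hcop.pow_right j) h1
    have hxn : x < n := by omega
    have hyn : y < n := by omega
    rcases le_or_gt d (m / 2) with hdle | hdgt
    · have hb : y * q ^ d ≤ n := hkey y d hy2 hdle
      have hxe : x = y * q ^ d := hmod x _ hx1 hxn hb h2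
      rcases Nat.eq_zero_or_pos d with hd0 | hdpos
      · constructor
        · rw [hxe, hd0]; ring
        · omega
      · exfalso
        apply hx3
        rw [hxe]
        exact Dvd.dvd.mul_left (dvd_pow_self q (by omega)) y
    · -- d > m/2 : multiply by q^(m-d)
      exfalso
      have hdm : d < m := by omega
      have h3 : x * q ^ (m - d) ≡ y * q ^ d * q ^ (m - d) [MOD n] :=
        Nat.ModEq.mul_right _ h2
      have h4 : y * q ^ d * q ^ (m - d) = y * q ^ m := by
        rw [mul_assoc, ← pow_add]
        congr 2
        omega
      have h5 : y * q ^ m ≡ y * 1 [MOD n] := Nat.ModEq.mul_left y hqm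
      have h4' : x * q ^ (m - d) ≡ y * q ^ m [MOD n] := by rw [← h4]; exact h3
      have h6 : y ≡ x * q ^ (m - d) [MOD n] := by
        simpa using (h4'.trans h5).symm
      have hb : x * q ^ (m - d) ≤ n := hkey x (m - d) hx2 (by omega)
      have hye : y = x * q ^ (m - d) := hmod y _ hy1 hyn hb h6
      apply hy3
      rw [hye]
      exact Dvd.dvd.mul_left (dvd_pow_self q (by omega)) x
  -- reduction: every x q^j mod n equals some y q^i mod n with y ∈ D, i < m
  have reduce : ∀ x, 1 ≤ x → x ≤ δ - 1 → ∀ j,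
      ∃ y ∈ D, ∃ i < m, x * q ^ j % n = y * q ^ i % n := by
    intro x
    induction x using Nat.strong_induction_on with
    | _ x IH =>
      intro hx1 hx2 j
      by_cases hdvd : q ∣ x
      · obtain ⟨x', hx'⟩ := hdvd
        have hx'1 : 1 ≤ x' := by
          rcases Nat.eq_zero_or_pos x' with h | h
          · subst h; simp at hx'; omega
          · exact h
        have hx'lt : x' < x := by
          calc x' < 2 * x' := by omega
            _ ≤ q * x' := Nat.mul_le_mul_right x' hq2
            _ = x := hx'.symm
        have hx'2 : x' ≤ δ - 1 := by omega
        obtain ⟨y, hy, i, hi, he⟩ := IH x' hx'lt hx'1 hx'2 (j + 1)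
        refine ⟨y, hy, i, hi, ?_⟩
        rw [← he, hx', pow_succ]
        ring_nf
      · refine ⟨x, ?_, j % m, Nat.mod_lt _ hmpos, ?_⟩
        · rw [hD, Finset.mem_filter, Finset.mem_Ioc]
          exact ⟨⟨by omega, hx2⟩, hdvd⟩
        · have hpow : q ^ j ≡ q ^ (j % m) [MOD n] := by
            conv_lhs => rw [← Nat.div_add_mod j m, pow_add, pow_mul]
            calc (q ^ m) ^ (j / m) * q ^ (j % m)
                ≡ 1 ^ (j / m) * q ^ (j % m) [MOD n] :=
                  Nat.ModEq.mul_right _ (hqm.pow _)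
              _ = q ^ (j % m) := by rw [one_pow, one_mul]
          exact Nat.ModEq.mul_left x hpow
  -- the defining set equals the image of T under f
  have himg : ((Finset.range n).filter (fun z =>
      ∃ x ∈ Finset.Icc 1 (δ - 1), ∃ j ∈ Finset.range m, z = x * q ^ j % n))
      = T.image f := by
    ext z
    simp only [Finset.mem_filter, Finset.mem_range, Finset.mem_image, Finset.mem_Icc,
      hT, hf, Finset.mem_product]
    constructor
    · rintro ⟨hz, x, ⟨hx1, hx2⟩, j, hj, hze⟩
      obtain ⟨y, hy, i, hi, he⟩ := reduce x hx1 hx2 j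
      exact ⟨(y, i), ⟨hy, hi⟩, (hze.trans he).symm⟩
    · rintro ⟨⟨x, j⟩, ⟨hx, hj⟩, hze⟩
      obtain ⟨hx1, hx2, _⟩ := hDmem x hx
      refine ⟨?_, x, ⟨hx1, hx2⟩, j, hj, hze.symm⟩
      rw [← hze]
      exact Nat.mod_lt _ hn
  rw [himg]
  have hinjOn : Set.InjOn f T := by
    intro p hp p' hp' hfe
    rw [Finset.mem_coe, hT, Finset.mem_product, Finset.mem_range] at hp hp'
    rcases le_total p.2 p'.2 with h | h
    · obtain ⟨h1, h2⟩ := inj2 p.1 hp.1 p'.1 hp'.1 p.2 hp.2 p'.2 hp'.2 h hfe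
      exact Prod.ext h1 h2
    · obtain ⟨h1, h2⟩ := inj2 p'.1 hp'.1 p.1 hp.1 p'.2 hp'.2 p.2 hp.2 h hfe.symm
      exact Prod.ext h1.symm h2.symm
  rw [Finset.card_image_of_injOn hinjOn, hT, Finset.card_product, Finset.card_range]
  have hDcard : D.card = (δ - 1) - (δ - 1) / q := by
    have h1 := Finset.card_filter_add_card_filter_not
      (s := Finset.Ioc 0 (δ - 1)) (p := fun x => q ∣ x)
    have h2 : ((Finset.Ioc 0 (δ - 1)).filter (fun x => q ∣ x)).card = (δ - 1) / q :=
      Nat.Ioc_filter_dvd_card_eq_div (δ - 1) q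
    have h3 : (Finset.Ioc 0 (δ - 1)).card = δ - 1 := by
      rw [Nat.card_Ioc]; omega
    rw [hD]
    omega
  rw [hDcard]
  ring
end

section
/- Let q be a prime power, gcd(n,q)=1, m = ord_n(q), and δ_max = ⌊n(q^⌈m/2⌉ − 1 − (q−2)[m odd])/(q^m−1)⌋. For 2 ≤ δ ≤ δ_max, the Euclidean dual of the narrow-sense BCH code BCH(n,q;δ) has minimum distance d⊥ ≥ δ_max + 1. Equivalently, the defining set T_δ = (N \ Z_δ)^{-1} of the dual code contains {0, 1, …, δ_max − 1}, i.e., at least δ_max consecutive residues. -/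
/-- Auxiliary: the key size estimate `(N₀ - 1) * (q ^ (m/2) + 1) < q ^ m - 1`. -/
lemma bch_key_ineq (q m : ℕ) (hq2 : 2 ≤ q) (hm1 : 1 ≤ m) :
    (q ^ ((m + 1) / 2) - 1 - (q - 2) * (if Odd m then 1 else 0) - 1) * (q ^ (m / 2) + 1)
      < q ^ m - 1 := by
  rcases Nat.even_or_odd m with hev | hodd
  · obtain ⟨r, hr⟩ := hev
    have hr1 : 1 ≤ r := by omega
    have hA : 2 ≤ q ^ r := by
      calc 2 = 2 ^ 1 := by norm_num
      _ ≤ q ^ r := (Nat.pow_le_pow_left hq2 1).trans (Nat.pow_le_pow_right (by omega) hr1)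
    have e1 : (m + 1) / 2 = r := by omega
    have e2 : m / 2 = r := by omega
    have e3 : q ^ m = q ^ r * q ^ r := by rw [hr, ← pow_add]
    rw [e1, e2, e3, if_neg (by rw [Nat.odd_iff]; omega), mul_zero, Nat.sub_zero]
    have h1 : 1 ≤ q ^ r := by omega
    have h2 : 1 ≤ q ^ r - 1 := by omega
    have h3 : 1 ≤ q ^ r * q ^ r := Nat.mul_pos (by omega) (by omega)
    zify [h1, h2, h3]
    have hA' : (2 : ℤ) ≤ (q : ℤ) ^ r := by exact_mod_cast hA
    nlinarith [hA']
  · obtain ⟨r, hr⟩ := hodd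
    have e1 : (m + 1) / 2 = r + 1 := by omega
    have e2 : m / 2 = r := by omega
    have e3 : q ^ m = q * (q ^ r * q ^ r) := by
      rw [hr, show 2 * r + 1 = 1 + (r + r) by ring, pow_add, pow_add, pow_one]
    have hqr : q ≤ q ^ (r + 1) := by
      calc q = q ^ 1 := (pow_one q).symm
      _ ≤ q ^ (r + 1) := Nat.pow_le_pow_right (by omega) (by omega)
    have h0 : 0 < q ^ r := Nat.one_le_pow _ _ (by omega)
    rw [e1, e2, e3, if_pos (by exact ⟨r, by omega⟩), mul_one]
    have h1 : 1 ≤ q ^ (r + 1) := by omega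
    have h2 : q - 2 ≤ q ^ (r + 1) - 1 := by omega
    have h3 : 1 ≤ q ^ (r + 1) - 1 - (q - 2) := by omega
    have h4 : 1 ≤ q * (q ^ r * q ^ r) := Nat.mul_pos (by omega) (Nat.mul_pos h0 h0)
    zify [h1, h2, h3, h4, hq2]
    have e4 : (q : ℤ) ^ (r + 1) = q * q ^ r := by ring
    have hA' : (1 : ℤ) ≤ (q : ℤ) ^ r := by exact_mod_cast Nat.one_le_pow r q (by omega)
    have hq2' : (2 : ℤ) ≤ (q : ℤ) := by exact_mod_cast hq2
    rw [e4]
    nlinarith [hA', hq2']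

/-- Auxiliary: no `u * q ^ a + v ≡ 0 (mod n)` with `u, v` in `[1, D-1]` is possible,
where `D = n*N₀/(q^m-1)`. First reduce the exponent to `a ≤ m/2`, then use size. -/
lemma bch_no_sum (n q m D x t j : ℕ) (hq2 : 2 ≤ q) (hn : 0 < n) (hm1 : 1 ≤ m)
    (hMdvd : n ∣ q ^ m - 1)
    (hD : D = n * (q ^ ((m + 1) / 2) - 1 - (q - 2) * (if Odd m then 1 else 0)) / (q ^ m - 1))
    (hD2 : 2 ≤ D)
    (hx1 : 1 ≤ x) (hx2 : x ≤ D - 1) (ht1 : 1 ≤ t) (ht2 : t ≤ D - 1)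
    (hdvd : n ∣ x * q ^ j + t) : False := by
  set N0 : ℕ := q ^ ((m + 1) / 2) - 1 - (q - 2) * (if Odd m then 1 else 0) with hN0
  have hqm1 : 1 ≤ q ^ m := Nat.one_le_pow _ _ (by omega)
  -- work over ℤ for the divisibility reductions
  have hMz : (n : ℤ) ∣ (q : ℤ) ^ m - 1 := by
    have := Int.natCast_dvd_natCast.mpr hMdvd
    push_cast [hqm1] at this
    exact this
  have hdz : (n : ℤ) ∣ (x : ℤ) * q ^ j + t := by
    have := Int.natCast_dvd_natCast.mpr hdvd
    push_cast at this
    exact this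
  -- Step 1: reduce exponent j to a := j % m
  have hstep1 : (n : ℤ) ∣ (x : ℤ) * q ^ (j % m) + t := by
    have hj : (q : ℤ) ^ j = ((q : ℤ) ^ m) ^ (j / m) * q ^ (j % m) := by
      rw [← pow_mul, ← pow_add, Nat.div_add_mod]
    have hdd : (n : ℤ) ∣ (x : ℤ) * q ^ (j % m) * (((q : ℤ) ^ m) ^ (j / m) - 1) := by
      exact Dvd.dvd.mul_left (hMz.trans (by simpa using sub_dvd_pow_sub_pow ((q:ℤ)^m) 1 (j/m))) _
    have : (x : ℤ) * q ^ (j % m) + t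
        = ((x : ℤ) * q ^ j + t) - (x : ℤ) * q ^ (j % m) * (((q : ℤ) ^ m) ^ (j / m) - 1) := by
      rw [hj]; ring
    rw [this]
    exact dvd_sub hdz hdd
  -- Step 2: get exponent a ≤ m/2 (possibly swapping x and t)
  have hmain : ∃ u v a, 1 ≤ u ∧ u ≤ D - 1 ∧ 1 ≤ v ∧ v ≤ D - 1 ∧ a ≤ m / 2 ∧
      (n : ℤ) ∣ (u : ℤ) * q ^ a + v := by
    by_cases hle : j % m ≤ m / 2
    · exact ⟨x, t, j % m, hx1, hx2, ht1, ht2, hle, hstep1⟩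
    · refine ⟨t, x, m - j % m, ht1, ht2, hx1, hx2, by have := Nat.mod_lt j (show 0 < m by omega); omega, ?_⟩
      have hsw : (t : ℤ) * q ^ (m - j % m) + x
          = ((x : ℤ) * q ^ (j % m) + t) * q ^ (m - j % m) - (x : ℤ) * ((q : ℤ) ^ m - 1) := by
        have : (q : ℤ) ^ (j % m) * q ^ (m - j % m) = q ^ m := by
          rw [← pow_add]
          congr 1
          have := Nat.mod_lt j (show 0 < m by omega)
          omega
        nlinarith [this]
      rw [hsw]
      exact dvd_sub (hstep1.mul_right _) (hMz.mul_left _)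
  obtain ⟨u, v, a, hu1, hu2, hv1, hv2, ha, hdz2⟩ := hmain
  -- Back to ℕ
  have hdn : n ∣ u * q ^ a + v := by
    rw [← Int.natCast_dvd_natCast]
    push_cast
    exact hdz2
  have hge : n ≤ u * q ^ a + v := Nat.le_of_dvd (lt_of_lt_of_le hv1 (Nat.le_add_left v _)) hdn
  -- size bound
  set c : ℕ := (q ^ m - 1) / n with hc
  have hnc : n * c = q ^ m - 1 := Nat.mul_div_cancel' hMdvd
  have hqm2 : 2 ≤ q ^ m := by
    calc 2 = 2 ^ 1 := by norm_num
    _ ≤ q ^ 1 := Nat.pow_le_pow_left hq2 1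
    _ ≤ q ^ m := Nat.pow_le_pow_right (by omega) hm1
  have hc1 : 1 ≤ c := (Nat.one_le_div_iff hn).mpr (Nat.le_of_dvd (by omega) hMdvd)
  have hcD : c * D ≤ N0 := by
    have : D = N0 / c := by
      rw [hD, ← hnc, Nat.mul_div_mul_left _ _ hn]
    rw [this, mul_comm]
    exact Nat.div_mul_le_self _ _
  have hqa : q ^ a ≤ q ^ (m / 2) := Nat.pow_le_pow_right (by omega) ha
  have hkey : (N0 - 1) * (q ^ (m / 2) + 1) < q ^ m - 1 := bch_key_ineq q m hq2 hm1
  have hbound : c * (u * q ^ a + v) ≤ (N0 - 1) * (q ^ (m / 2) + 1) := by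
    have h1 : u * q ^ a + v ≤ (D - 1) * (q ^ (m / 2) + 1) := by
      have : u * q ^ a ≤ (D - 1) * q ^ (m / 2) :=
        Nat.mul_le_mul hu2 hqa
      nlinarith [this, hv2]
    have h2 : c * ((D - 1) * (q ^ (m / 2) + 1)) = (c * (D - 1)) * (q ^ (m / 2) + 1) := by ring
    have h3 : c * (D - 1) ≤ N0 - 1 := by
      have e : c * (D - 1) + c = c * D := by
        have : D - 1 + 1 = D := by omega
        calc c * (D - 1) + c = c * ((D - 1) + 1) := by ring
        _ = c * D := by rw [this]
      omega
    calc c * (u * q ^ a + v) ≤ c * ((D - 1) * (q ^ (m / 2) + 1)) :=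
      Nat.mul_le_mul_left _ h1
    _ = (c * (D - 1)) * (q ^ (m / 2) + 1) := h2
    _ ≤ (N0 - 1) * (q ^ (m / 2) + 1) := Nat.mul_le_mul_right _ h3
  have : c * (u * q ^ a + v) < c * n := by
    rw [mul_comm c n, hnc]
    exact lt_of_le_of_lt hbound hkey
  have hlt : u * q ^ a + v < n := lt_of_mul_lt_mul_left this (Nat.zero_le c)
  omega

/-- for `2 ≤ δ ≤ δ_max = ⌊n(q^⌈m/2⌉ − 1 − (q−2)[m odd])/(q^m−1)⌋`,
the Euclidean dual of `BCH(n,q;δ)` has minimum distance `≥ δ_max + 1`;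
equivalently its defining set `T_δ = (N ∖ Z_δ)⁻¹` contains `{0, 1, …, δ_max − 1}`. -/
theorem bch_dual_distance (n q m δ : ℕ)
    (hq : IsPrimePow q) (hn : 0 < n) (hcop : Nat.Coprime n q)
    (hm : m = orderOf (q : ZMod n))
    (hδ2 : 2 ≤ δ)
    (hδmax : δ ≤ n * (q ^ ((m + 1) / 2) - 1 - (q - 2) * (if Odd m then 1 else 0)) /
        (q ^ m - 1))
    (Z : Set ℕ)
    (hZ : Z = ⋃ x ∈ Set.Icc 1 (δ - 1), {z : ℕ | ∃ j : ℕ, z = x * q ^ j % n}) :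
    ∀ t < n * (q ^ ((m + 1) / 2) - 1 - (q - 2) * (if Odd m then 1 else 0)) / (q ^ m - 1),
      t ∈ (fun s => (n - s % n) % n) '' ({z : ℕ | z < n} \ Z) := by
  intro t ht
  have hq2 : 2 ≤ q := hq.two_le
  haveI : NeZero n := ⟨hn.ne'⟩
  set N0 : ℕ := q ^ ((m + 1) / 2) - 1 - (q - 2) * (if Odd m then 1 else 0) with hN0
  set D : ℕ := n * N0 / (q ^ m - 1) with hD
  -- m ≥ 1
  have hm1 : 1 ≤ m := by
    rw [hm, ← ZMod.coe_unitOfCoprime q hcop.symm, orderOf_units]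
    exact orderOf_pos _
  have hqm1 : 1 ≤ q ^ m := Nat.one_le_pow _ _ (by omega)
  have hqm2 : 2 ≤ q ^ m := by
    calc 2 = 2 ^ 1 := by norm_num
    _ ≤ q ^ 1 := Nat.pow_le_pow_left hq2 1
    _ ≤ q ^ m := Nat.pow_le_pow_right (by omega) hm1
  -- n ∣ q^m - 1
  have hMdvd : n ∣ q ^ m - 1 := by
    have h1 : ((q ^ m : ℕ) : ZMod n) = ((1 : ℕ) : ZMod n) := by
      push_cast
      rw [hm]
      exact pow_orderOf_eq_one _
    exact (Nat.modEq_iff_dvd' hqm1).mp ((ZMod.natCast_eq_natCast_iff _ _ _).mp h1).symm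
  -- D ≤ n
  have hDn : D ≤ n := by
    have hle : N0 ≤ q ^ m - 1 := by
      have : q ^ ((m + 1) / 2) ≤ q ^ m := Nat.pow_le_pow_right (by omega) (by omega)
      have hN0le : N0 ≤ q ^ ((m + 1) / 2) - 1 := Nat.sub_le _ _
      omega
    calc D ≤ n * (q ^ m - 1) / (q ^ m - 1) :=
      Nat.div_le_div_right (Nat.mul_le_mul_left _ hle)
    _ = n := Nat.mul_div_cancel _ (by omega)
  have hD2 : 2 ≤ D := le_trans hδ2 hδmax
  have htn : t < n := lt_of_lt_of_le ht hDn
  -- not-in-Z helper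
  have hnotZ : ∀ s, (∀ x, 1 ≤ x → x ≤ δ - 1 → ∀ j, s ≠ x * q ^ j % n) → s ∉ Z := by
    intro s hs hmem
    rw [hZ] at hmem
    simp only [Set.mem_iUnion, Set.mem_setOf_eq, Set.mem_Icc] at hmem
    obtain ⟨x, ⟨hx1, hx2⟩, j, hj⟩ := hmem
    exact hs x hx1 hx2 j hj
  rcases Nat.eq_zero_or_pos t with rfl | htpos
  · -- t = 0 : take s = 0
    refine ⟨0, ⟨hn, hnotZ 0 ?_⟩, by simp⟩
    intro x hx1 hx2 j h0
    have hdvd : n ∣ x * q ^ j := Nat.dvd_of_mod_eq_zero h0.symm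
    have hcopj : Nat.Coprime n (q ^ j) := hcop.pow_right j
    have hdx : n ∣ x := hcopj.dvd_of_dvd_mul_right hdvd
    have : n ≤ x := Nat.le_of_dvd (by omega) hdx
    omega
  · -- t ≥ 1 : take s = n - t
    refine ⟨n - t, ⟨by simpa using Nat.sub_lt hn htpos, hnotZ (n - t) ?_⟩, ?_⟩
    · intro x hx1 hx2 j hj
      -- n ∣ x * q^j + t
      have hmod : x * q ^ j % n = n - t := hj.symm
      have h1 : n ∣ x * q ^ j - x * q ^ j % n := Nat.dvd_sub_mod _
      have h2 : x * q ^ j % n ≤ x * q ^ j := Nat.mod_le _ _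
      have h3 : x * q ^ j + t = (x * q ^ j - x * q ^ j % n) + n := by omega
      have hdvd : n ∣ x * q ^ j + t := by
        rw [h3]
        exact Nat.dvd_add h1 dvd_rfl
      exact bch_no_sum n q m D x t j hq2 hn hm1 hMdvd (by rw [hD, hN0]) hD2
        hx1 (by omega) htpos (by omega) hdvd
    · show (n - (n - t) % n) % n = t
      have h1 : (n - t) % n = n - t := Nat.mod_eq_of_lt (by omega)
      rw [h1, Nat.sub_sub_self htn.le, Nat.mod_eq_of_lt htn]
end

section
/- Let q be a prime power, gcd(n,q)=1, m = ord_n(q²), and δ_max = ⌊n(q^{m+[m even]} − 1 − (q²−2)[m even])/(q^{2m}−1)⌋. If 2 ≤ δ ≤ δ_max and Z = C_1 ∪ ⋯ ∪ C_{δ−1} is the union of q²-ary cyclotomic cosets modulo n, then Z ∩ Z^{−q} = ∅, where Z^{−q} = { −q·z mod n : z ∈ Z }. Hence BCH(n,q²;δ) contains its Hermitian dual. -/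
set_option maxHeartbeats 1000000

lemma flip_dvd (n q m x y s : ℕ) (hq : 1 ≤ q) (hs : s ≤ 2*m)
    (h2m : n ∣ q^(2*m) - 1) (hdvd : n ∣ x + y * q ^ s) :
    n ∣ y + x * q ^ (2*m - s) := by
  have h12m : (1:ℕ) ≤ q ^ (2*m) := Nat.one_le_pow _ _ (by omega)
  have hpow : q ^ s * q ^ (2*m - s) = q ^ (2*m) := by rw [← pow_add]; congr 1; omega
  have h1 : n ∣ (x + y * q ^ s) * q ^ (2*m - s) := hdvd.mul_right _
  have h2 : n ∣ y * (q^(2*m) - 1) := h2m.mul_left y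
  have heq : (x + y * q ^ s) * q ^ (2*m - s) = (y + x * q ^ (2*m - s)) + y * (q^(2*m) - 1) := by
    zify [h12m]
    linear_combination (y:ℤ) * (by exact_mod_cast hpow : (q:ℤ)^s * (q:ℤ)^(2*m-s) = (q:ℤ)^(2*m))
  rw [heq] at h1
  have := Nat.dvd_sub h1 h2
  simpa using this

lemma core_odd (q N n m δ x y s : ℕ) (hq : 2 ≤ q) (hN : 0 < N)
    (hnN : n * N = q ^ (2*m) - 1) (hδN : δ * N ≤ q ^ m - 1)
    (hx : 1 ≤ x) (hx' : x ≤ δ - 1) (hy : 1 ≤ y) (hy' : y ≤ δ - 1)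
    (hs : s ≤ m) (hdvd : n ∣ x + y * q ^ s) : False := by
  have hδ1 : 2 ≤ δ := by omega
  have h1m : (1:ℕ) ≤ q ^ m := Nat.one_le_pow _ _ (by omega)
  have h1s : (1:ℕ) ≤ q ^ s := Nat.one_le_pow _ _ (by omega)
  have h12m : (1:ℕ) ≤ q ^ (2*m) := Nat.one_le_pow _ _ (by omega)
  obtain ⟨c, hc⟩ := hdvd
  have hys : 1 ≤ y * q ^ s := Nat.one_le_iff_ne_zero.2 (by positivity)
  have hc1 : 1 ≤ c := by
    rcases Nat.eq_zero_or_pos c with h | h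
    · subst h; simp at hc; omega
    · exact h
  have Hsm : (q:ℤ) ^ s ≤ (q:ℤ) ^ m := by exact_mod_cast Nat.pow_le_pow_right (by omega) hs
  have Hqq : (q:ℤ) ^ m * (q:ℤ) ^ m = (q:ℤ) ^ (2*m) := by rw [← pow_add]; ring_nf
  have HnN : (n:ℤ) * N = (q:ℤ) ^ (2*m) - 1 := by
    have := hnN; zify [h12m] at this; exact this
  have HδN : (δ:ℤ) * N ≤ (q:ℤ) ^ m - 1 := by
    have := hδN; zify [h1m] at this; exact this
  have Hx' : (x:ℤ) ≤ (δ:ℤ) - 1 := by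
    have := hx'; zify [show (1:ℕ) ≤ δ by omega] at this; exact this
  have Hy' : (y:ℤ) ≤ (δ:ℤ) - 1 := by
    have := hy'; zify [show (1:ℕ) ≤ δ by omega] at this; exact this
  have Hc : (x:ℤ) + y * (q:ℤ)^s = n * c := by exact_mod_cast hc
  have H1m : (1:ℤ) ≤ (q:ℤ)^m := by exact_mod_cast h1m
  have H1s : (1:ℤ) ≤ (q:ℤ)^s := by exact_mod_cast h1s
  have Hx : (1:ℤ) ≤ x := by exact_mod_cast hx
  have Hy : (1:ℤ) ≤ y := by exact_mod_cast hy
  have Hc1 : (1:ℤ) ≤ c := by exact_mod_cast hc1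
  have HN : (1:ℤ) ≤ N := by exact_mod_cast hN
  have e1 : (x:ℤ) + y * (q:ℤ)^s ≤ ((δ:ℤ)-1) * (1 + (q:ℤ)^m) := by
    nlinarith [mul_le_mul Hy' Hsm (by positivity : (0:ℤ) ≤ (q:ℤ)^s) (by linarith : (0:ℤ) ≤ (δ:ℤ)-1)]
  have e3 : ((δ:ℤ)*N) * (1+(q:ℤ)^m) ≤ ((q:ℤ)^m - 1) * (1+(q:ℤ)^m) :=
    mul_le_mul_of_nonneg_right HδN (by positivity)
  have e5 : (n:ℤ) * N ≤ (n:ℤ) * N * c :=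
    le_mul_of_one_le_right (by positivity) Hc1
  have e6 : (N:ℤ) * ((x:ℤ) + y * (q:ℤ)^s) ≤ ((δ:ℤ)*N)*(1+(q:ℤ)^m) - N*(1+(q:ℤ)^m) := by
    have h := mul_le_mul_of_nonneg_left e1 (show (0:ℤ) ≤ N by positivity)
    calc (N:ℤ) * ((x:ℤ) + y * (q:ℤ)^s) ≤ (N:ℤ) * (((δ:ℤ)-1) * (1 + (q:ℤ)^m)) := h
      _ = ((δ:ℤ)*N)*(1+(q:ℤ)^m) - N*(1+(q:ℤ)^m) := by ring
  have e7 : (N:ℤ) * ((x:ℤ) + y * (q:ℤ)^s) = (n:ℤ)*N*c := by rw [Hc]; ring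
  have e8 : ((q:ℤ)^m - 1)*(1+(q:ℤ)^m) = (q:ℤ)^(2*m) - 1 := by rw [← Hqq]; ring
  have e9 : (2:ℤ) ≤ (N:ℤ)*(1+(q:ℤ)^m) := by nlinarith [HN, H1m]
  linarith [e3, e5, e6, e7, e8, e9, HnN]

lemma qsq4 (q : ℕ) (hq : 2 ≤ q) : (4:ℤ) ≤ (q:ℤ) ^ 2 := by
  have h : (2:ℤ) ≤ q := by exact_mod_cast hq
  nlinarith

lemma core_even_small (q N n m δ x y s : ℕ) (hq : 2 ≤ q) (hN : 0 < N)
    (hnN : n * N = q ^ (2*m) - 1) (hδN : δ * N + q ^ 2 ≤ q ^ (m+1) + 1)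
    (hx : 1 ≤ x) (hx' : x ≤ δ - 1) (hy : 1 ≤ y) (hy' : y ≤ δ - 1)
    (hm : 4 ≤ m) (hs : s + 3 ≤ m) (hdvd : n ∣ x + y * q ^ s) : False := by
  have hδ1 : 2 ≤ δ := by omega
  have h12m : (1:ℕ) ≤ q ^ (2*m) := Nat.one_le_pow _ _ (by omega)
  obtain ⟨c, hc⟩ := hdvd
  have hys : 1 ≤ y * q ^ s := Nat.one_le_iff_ne_zero.2 (by positivity)
  have hc1 : 1 ≤ c := by
    rcases Nat.eq_zero_or_pos c with h | h
    · subst h; simp at hc; omega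
    · exact h
  have Hsm : (q:ℤ) ^ s ≤ (q:ℤ) ^ (m-3) := by
    exact_mod_cast Nat.pow_le_pow_right (by omega) (by omega)
  have P1 : (q:ℤ) ^ (m-3) * (q:ℤ) ^ (m+1) = (q:ℤ) ^ (2*m-2) := by
    rw [← pow_add]; congr 1; omega
  have P2 : (q:ℤ) ^ (2*m-2) * (q:ℤ) ^ 2 = (q:ℤ) ^ (2*m) := by
    rw [← pow_add]; congr 1; omega
  have P3 : (q:ℤ) ^ (m+1) ≤ (q:ℤ) ^ (2*m-2) := by
    exact_mod_cast Nat.pow_le_pow_right (by omega) (by omega)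
  have P4 : (q:ℤ) ^ (m-3) ≤ (q:ℤ) ^ (2*m-2) := by
    exact_mod_cast Nat.pow_le_pow_right (by omega) (by omega)
  have P6 : (4:ℤ) ≤ (q:ℤ) ^ 2 := qsq4 q hq
  have P5 : (4:ℤ) ≤ (q:ℤ) ^ (2*m-2) := by
    calc (4:ℤ) ≤ (q:ℤ)^2 := P6
    _ ≤ (q:ℤ)^(2*m-2) := by
        exact_mod_cast Nat.pow_le_pow_right (by omega) (by omega)
  have HnN : (n:ℤ) * N = (q:ℤ) ^ (2*m) - 1 := by
    have := hnN; zify [h12m] at this; exact this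
  have HδN : (δ:ℤ) * N + (q:ℤ)^2 ≤ (q:ℤ) ^ (m+1) + 1 := by exact_mod_cast hδN
  have Hx' : (x:ℤ) ≤ (δ:ℤ) - 1 := by
    have := hx'; zify [show (1:ℕ) ≤ δ by omega] at this; exact this
  have Hy' : (y:ℤ) ≤ (δ:ℤ) - 1 := by
    have := hy'; zify [show (1:ℕ) ≤ δ by omega] at this; exact this
  have Hc : (x:ℤ) + y * (q:ℤ)^s = n * c := by exact_mod_cast hc
  have H1m : (1:ℤ) ≤ (q:ℤ)^(m-3) := by
    exact_mod_cast Nat.one_le_pow _ _ (show 0 < q by omega)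
  have Hx : (1:ℤ) ≤ x := by exact_mod_cast hx
  have Hy : (1:ℤ) ≤ y := by exact_mod_cast hy
  have Hc1 : (1:ℤ) ≤ c := by exact_mod_cast hc1
  have HN : (1:ℤ) ≤ N := by exact_mod_cast hN
  have e1 : (x:ℤ) + y * (q:ℤ)^s ≤ ((δ:ℤ)-1) * (1 + (q:ℤ)^(m-3)) := by
    nlinarith [mul_le_mul Hy' Hsm (by positivity : (0:ℤ) ≤ (q:ℤ)^s) (by linarith : (0:ℤ) ≤ (δ:ℤ)-1)]
  have e5 : (n:ℤ) * N ≤ (n:ℤ) * N * c :=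
    le_mul_of_one_le_right (by positivity) Hc1
  have e6 : (N:ℤ) * ((x:ℤ) + y * (q:ℤ)^s) ≤ ((δ:ℤ)*N)*(1+(q:ℤ)^(m-3)) - N*(1+(q:ℤ)^(m-3)) := by
    have h := mul_le_mul_of_nonneg_left e1 (show (0:ℤ) ≤ N by positivity)
    calc (N:ℤ) * ((x:ℤ) + y * (q:ℤ)^s) ≤ (N:ℤ) * (((δ:ℤ)-1) * (1 + (q:ℤ)^(m-3))) := h
      _ = ((δ:ℤ)*N)*(1+(q:ℤ)^(m-3)) - N*(1+(q:ℤ)^(m-3)) := by ring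
  have e7 : (N:ℤ) * ((x:ℤ) + y * (q:ℤ)^s) = (n:ℤ)*N*c := by rw [Hc]; ring
  have B2 : ((δ:ℤ)*N)*(1+(q:ℤ)^(m-3)) ≤ ((q:ℤ)^(m+1) + 1 - (q:ℤ)^2)*(1+(q:ℤ)^(m-3)) :=
    mul_le_mul_of_nonneg_right (by linarith) (by positivity)
  have hexp : ((q:ℤ)^(m+1) + 1 - (q:ℤ)^2)*(1+(q:ℤ)^(m-3))
      = (q:ℤ)^(m+1) + 1 - (q:ℤ)^2 + (q:ℤ)^(2*m-2) + (q:ℤ)^(m-3) - (q:ℤ)^2 * (q:ℤ)^(m-3) := by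
    linear_combination P1
  have hqn : (0:ℤ) ≤ (q:ℤ)^2 * (q:ℤ)^(m-3) := by positivity
  have B4 : (q:ℤ)^(m+1) + 1 + (q:ℤ)^(2*m-2) + (q:ℤ)^(m-3) + 2 ≤ (q:ℤ)^(2*m) := by
    have h4 := mul_le_mul_of_nonneg_left P6 (show (0:ℤ) ≤ (q:ℤ)^(2*m-2) by positivity)
    linarith [P2, P3, P4, P5, h4]
  have e9 : (2:ℤ) ≤ (N:ℤ)*(1+(q:ℤ)^(m-3)) := by nlinarith [HN, H1m]
  linarith [e5, e6, e7, B2, hexp, hqn, B4, e9, HnN, P6]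

lemma core_even_boundary (q N n m δ x y : ℕ) (hq : 2 ≤ q) (hN : 0 < N)
    (hnN : n * N = q ^ (2*m) - 1) (hδN : δ * N + q ^ 2 ≤ q ^ (m+1) + 1)
    (hx : 1 ≤ x) (hx' : x ≤ δ - 1) (hy : 1 ≤ y) (hy' : y ≤ δ - 1)
    (hm : 2 ≤ m) (hdvd : n ∣ x + y * q ^ (m-1)) : False := by
  have hδ1 : 2 ≤ δ := by omega
  have h12m : (1:ℕ) ≤ q ^ (2*m) := Nat.one_le_pow _ _ (by omega)
  obtain ⟨c, hc⟩ := hdvd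
  have hys : 1 ≤ y * q ^ (m-1) := Nat.one_le_iff_ne_zero.2 (by positivity)
  have hc1 : 1 ≤ c := by
    rcases Nat.eq_zero_or_pos c with h | h
    · subst h; simp at hc; omega
    · exact h
  have P1 : (q:ℤ) ^ (m-1) * (q:ℤ) ^ (m+1) = (q:ℤ) ^ (2*m) := by
    rw [← pow_add]; congr 1; omega
  have P2 : (q:ℤ) ^ 2 * (q:ℤ) ^ (m-1) = (q:ℤ) ^ (m+1) := by
    rw [← pow_add]; congr 1; omega
  have P6 : (4:ℤ) ≤ (q:ℤ) ^ 2 := qsq4 q hq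
  have P7 : (2:ℤ) ≤ (q:ℤ) ^ (m-1) := by
    calc (2:ℤ) = ((2:ℕ):ℤ) := by norm_num
    _ ≤ ((q ^ (m-1) : ℕ):ℤ) := by
        exact_mod_cast calc 2 = 2^1 := (pow_one 2).symm
          _ ≤ q^1 := Nat.pow_le_pow_left hq 1
          _ ≤ q^(m-1) := Nat.pow_le_pow_right (by omega) (by omega)
    _ = (q:ℤ)^(m-1) := by push_cast; ring
  have P8 : (q:ℤ)^(m-1) ≤ (q:ℤ)^(2*m) := by
    exact_mod_cast Nat.pow_le_pow_right (by omega) (by omega)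
  have HnN : (n:ℤ) * N = (q:ℤ) ^ (2*m) - 1 := by
    have := hnN; zify [h12m] at this; exact this
  have HδN : (δ:ℤ) * N + (q:ℤ)^2 ≤ (q:ℤ) ^ (m+1) + 1 := by exact_mod_cast hδN
  have Hx' : (x:ℤ) ≤ (δ:ℤ) - 1 := by
    have := hx'; zify [show (1:ℕ) ≤ δ by omega] at this; exact this
  have Hy' : (y:ℤ) ≤ (δ:ℤ) - 1 := by
    have := hy'; zify [show (1:ℕ) ≤ δ by omega] at this; exact this
  have Hc : (x:ℤ) + y * (q:ℤ)^(m-1) = n * c := by exact_mod_cast hc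
  have Hx : (1:ℤ) ≤ x := by exact_mod_cast hx
  have Hy : (1:ℤ) ≤ y := by exact_mod_cast hy
  have Hc1 : (1:ℤ) ≤ c := by exact_mod_cast hc1
  have HN : (1:ℤ) ≤ N := by exact_mod_cast hN
  -- step 1 : c = 1, i.e. x + y q^{m-1} = n
  have e1 : (x:ℤ) + y * (q:ℤ)^(m-1) ≤ ((δ:ℤ)-1) * (1 + (q:ℤ)^(m-1)) := by
    nlinarith [mul_le_mul Hy' (le_refl ((q:ℤ)^(m-1))) (by positivity : (0:ℤ) ≤ (q:ℤ)^(m-1)) (by linarith : (0:ℤ) ≤ (δ:ℤ)-1)]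
  have e6 : (N:ℤ) * ((x:ℤ) + y * (q:ℤ)^(m-1)) ≤ ((δ:ℤ)*N)*(1+(q:ℤ)^(m-1)) - N*(1+(q:ℤ)^(m-1)) := by
    have h := mul_le_mul_of_nonneg_left e1 (show (0:ℤ) ≤ N by positivity)
    calc (N:ℤ) * ((x:ℤ) + y * (q:ℤ)^(m-1)) ≤ (N:ℤ) * (((δ:ℤ)-1) * (1 + (q:ℤ)^(m-1))) := h
      _ = ((δ:ℤ)*N)*(1+(q:ℤ)^(m-1)) - N*(1+(q:ℤ)^(m-1)) := by ring
  have B2 : ((δ:ℤ)*N)*(1+(q:ℤ)^(m-1)) ≤ ((q:ℤ)^(m+1) + 1 - (q:ℤ)^2)*(1+(q:ℤ)^(m-1)) :=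
    mul_le_mul_of_nonneg_right (by linarith) (by positivity)
  have hexp2 : ((q:ℤ)^(m+1) + 1 - (q:ℤ)^2)*(1+(q:ℤ)^(m-1))
      = (q:ℤ)^(2*m) + (q:ℤ)^(m-1) - (q:ℤ)^2 + 1 := by
    linear_combination P1 - P2
  have B3 : ((q:ℤ)^(m+1) + 1 - (q:ℤ)^2)*(1+(q:ℤ)^(m-1)) < 2*((q:ℤ)^(2*m) - 1) := by
    rw [hexp2]; linarith [P8, P6]
  have hNpos : (0:ℤ) ≤ (N:ℤ)*(1+(q:ℤ)^(m-1)) := by positivity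
  have e7 : (N:ℤ) * ((x:ℤ) + y * (q:ℤ)^(m-1)) = (n:ℤ)*N*c := by rw [Hc]; ring
  have hcc : c = 1 := by
    by_contra hcc
    have h2 : (2:ℤ) ≤ c := by
      have h3 : 2 ≤ c := by omega
      exact_mod_cast h3
    have h5 : 2*((n:ℤ)*N) ≤ (n:ℤ)*N*c := by
      have h6 := mul_le_mul_of_nonneg_left h2 (show (0:ℤ) ≤ (n:ℤ)*N by positivity)
      linarith [h6]
    linarith [e6, B2, B3, e7, HnN, h5, hNpos]
  have key : (N:ℤ)*x + (N:ℤ)*y*(q:ℤ)^(m-1) = (q:ℤ)^(2*m) - 1 := by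
    have e8 : (N:ℤ) * ((x:ℤ) + y * (q:ℤ)^(m-1)) = (n:ℤ)*N := by
      rw [Hc, hcc]; push_cast; ring
    linear_combination e8 + HnN
  have hfac : (N:ℤ)*x + 1 = ((q:ℤ)^(m+1) - N*y) * (q:ℤ)^(m-1) := by
    linear_combination key - P1
  have hNy : (N:ℤ)*y ≤ (δ:ℤ)*N - N := by
    have h := mul_le_mul_of_nonneg_left Hy' (show (0:ℤ) ≤ N by positivity)
    calc (N:ℤ)*y ≤ (N:ℤ)*((δ:ℤ)-1) := h
      _ = (δ:ℤ)*N - N := by ring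
  have hNx : (N:ℤ)*x ≤ (δ:ℤ)*N - N := by
    have h := mul_le_mul_of_nonneg_left Hx' (show (0:ℤ) ≤ N by positivity)
    calc (N:ℤ)*x ≤ (N:ℤ)*((δ:ℤ)-1) := h
      _ = (δ:ℤ)*N - N := by ring
  have hclow : (q:ℤ)^2 + N - 1 ≤ (q:ℤ)^(m+1) - N*y := by linarith [HδN, hNy]
  have hcq : ((q:ℤ)^(m+1) - N*y) * (q:ℤ)^(m-1) ≤ (q:ℤ)^(m+1) + 2 - (q:ℤ)^2 - N := by
    linarith [hfac, hNx, HδN]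
  have h9 := mul_le_mul_of_nonneg_right hclow (show (0:ℤ) ≤ (q:ℤ)^(m-1) by positivity)
  have hexp3 : ((q:ℤ)^2 + N - 1) * (q:ℤ)^(m-1)
      = (q:ℤ)^(m+1) + ((N:ℤ)-1)*(q:ℤ)^(m-1) := by
    linear_combination P2
  have h10 : (0:ℤ) ≤ ((N:ℤ)-1)*(q:ℤ)^(m-1) :=
    mul_nonneg (by linarith) (by positivity)
  linarith [h9, hexp3, hcq, P6, HN, h10]


/-- for `m = ord_n(q²)` and
`δ_max = ⌊n(q^{m+[m even]} − 1 − (q²−2)[m even])/(q^{2m}−1)⌋`, if `2 ≤ δ ≤ δ_max`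
then the defining set `Z = C_1 ∪ ⋯ ∪ C_{δ−1}` of q²-ary cyclotomic cosets satisfies
`Z ∩ Z^{−q} = ∅`; hence `BCH(n,q²;δ)` contains its Hermitian dual. -/
theorem bch_hermitian_dual_containing_sufficient (n q m δ : ℕ)
    (hq : IsPrimePow q) (hn : 0 < n) (hcop : Nat.Coprime n q)
    (hm : m = orderOf ((q : ZMod n) ^ 2))
    (hδ2 : 2 ≤ δ)
    (hδmax : δ ≤ n * (q ^ (m + (if Even m then 1 else 0)) - 1 -
        (q ^ 2 - 2) * (if Even m then 1 else 0)) / (q ^ (2 * m) - 1))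
    (Z : Set ℕ)
    (hZ : Z = ⋃ x ∈ Set.Icc 1 (δ - 1), {z : ℕ | ∃ j : ℕ, z = x * (q ^ 2) ^ j % n}) :
    Z ∩ ((fun z => (n - z % n) * q % n) '' Z) = ∅ := by
  have hq2 : 2 ≤ q := hq.two_le
  haveI : NeZero n := ⟨hn.ne'⟩
  set g : ZMod n := (q : ZMod n) ^ 2 with hg
  have hu : IsUnit ((q:ℕ) : ZMod n) := (ZMod.isUnit_iff_coprime q n).2 hcop.symm
  have hm1 : 0 < m := by
    have h1 : g = ((hu.unit ^ 2 : (ZMod n)ˣ) : ZMod n) := by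
      rw [hg, Units.val_pow_eq_pow_val, hu.unit_spec]
    rw [hm, h1, orderOf_units]
    exact orderOf_pos _
  have hg1 : g ^ m = 1 := by rw [hm]; exact pow_orderOf_eq_one g
  have h12m : (1:ℕ) ≤ q ^ (2*m) := Nat.one_le_pow _ _ (by omega)
  have h2m : n ∣ q^(2*m) - 1 := by
    have hcast : ((q^(2*m) - 1 : ℕ) : ZMod n) = 0 := by
      rw [Nat.cast_sub h12m]
      push_cast
      rw [pow_mul]
      rw [show ((q:ZMod n))^2 = g from rfl, hg1]
      ring
    exact (ZMod.natCast_eq_zero_iff _ n).1 hcast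
  set N : ℕ := (q^(2*m) - 1) / n with hNdef
  have hnN : n * N = q ^ (2*m) - 1 := Nat.mul_div_cancel' h2m
  have hN : 0 < N := by
    rcases Nat.eq_zero_or_pos N with h | h
    · exfalso
      have : q^(2*m) - 1 = 0 := by rw [← hnN, h, mul_zero]
      have h4 : 4 ≤ q^(2*m) := by
        calc 4 = 2^2 := by norm_num
        _ ≤ q^2 := Nat.pow_le_pow_left hq2 2
        _ ≤ q^(2*m) := Nat.pow_le_pow_right (by omega) (by omega)
      omega
    · exact h
  -- δ * N bound
  have hδN : δ * N ≤ q ^ (m + (if Even m then 1 else 0)) - 1 -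
      (q ^ 2 - 2) * (if Even m then 1 else 0) := by
    rw [show q ^ (2*m) - 1 = n * N from hnN.symm, Nat.mul_div_mul_left _ _ hn] at hδmax
    exact (Nat.le_div_iff_mul_le hN).1 hδmax
  -- main argument
  rw [Set.eq_empty_iff_forall_notMem]
  rintro w ⟨hw1, z, hzZ, hzw⟩
  rw [hZ] at hw1 hzZ
  simp only [Set.mem_iUnion, Set.mem_Icc, Set.mem_setOf_eq] at hw1 hzZ
  obtain ⟨x, ⟨hx1, hx2⟩, j, hj⟩ := hw1
  obtain ⟨y, ⟨hy1, hy2⟩, k, hk⟩ := hzZ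
  -- the congruence in ZMod n
  have hwx : (w : ZMod n) = (x : ZMod n) * g ^ j := by
    rw [hj, ZMod.natCast_mod]
    push_cast
    rw [hg]
  have hwy : (w : ZMod n) = -((y : ZMod n) * g ^ k * q) := by
    rw [← hzw]
    have hzn : z % n ≤ n := le_of_lt (Nat.mod_lt z hn)
    rw [ZMod.natCast_mod, Nat.cast_mul, Nat.cast_sub hzn, ZMod.natCast_self,
      ZMod.natCast_mod, hk, ZMod.natCast_mod]
    push_cast
    rw [hg]
    ring
  have heq : (x : ZMod n) * g ^ j + (y : ZMod n) * g ^ k * q = 0 := by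
    rw [← hwx] at *
    rw [hwy]; ring
  -- normalize exponents
  set e : ℕ := (k + (m - j % m)) % m with he
  have hjm : j % m < m := Nat.mod_lt j hm1
  have hj2 : g ^ (j % m) = g ^ j := by
    rw [hm]; exact pow_mod_orderOf g j
  have h4 : g ^ j * g ^ (m - j % m) = 1 := by
    rw [← hj2, ← pow_add, show j % m + (m - j % m) = m by omega, hg1]
  have h5' : g ^ e = g ^ (k + (m - j % m)) := by
    rw [he, hm]; exact pow_mod_orderOf g _
  have h5 : g ^ k * g ^ (m - j % m) = g ^ e := by
    rw [← pow_add]; exact h5'.symm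
  have key2 : (x : ZMod n) + (y : ZMod n) * g ^ e * q = 0 := by
    have h6 : (x:ZMod n) + (y:ZMod n)*g^e*q
        = ((x:ZMod n) * g^j + (y:ZMod n)*g^k*q) * g^(m - j % m) := by
      calc (x:ZMod n) + (y:ZMod n)*g^e*q
          = (x:ZMod n) * (g^j * g^(m - j%m)) + (y:ZMod n)*(g^k*g^(m - j%m))*q := by
            rw [h4, h5]; ring
        _ = ((x:ZMod n) * g^j + (y:ZMod n)*g^k*q) * g^(m - j % m) := by ring
    rw [h6, heq, zero_mul]
  have hem : e < m := Nat.mod_lt _ hm1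
  -- natural-number divisibility
  have hdvd : n ∣ x + y * q ^ (2*e+1) := by
    apply (ZMod.natCast_eq_zero_iff _ n).1
    push_cast
    rw [pow_succ, pow_mul]
    rw [show ((q:ZMod n))^2 = g from rfl]
    rw [← key2]; ring
  -- case split
  rcases Nat.even_or_odd m with hpar | hpar
  · -- m even : reduce exponent to ≤ m-1, then boundary or small case
    obtain ⟨u, hu2⟩ := hpar
    have hδN' : δ * N + q ^ 2 ≤ q ^ (m+1) + 1 := by
      have ht1 : 4 ≤ q^2 := by
        calc 4 = 2^2 := by norm_num
        _ ≤ q^2 := Nat.pow_le_pow_left hq2 2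
      have ht2 : q^2 ≤ q^(m+1) := Nat.pow_le_pow_right (by omega) (by omega)
      rw [if_pos (by exact ⟨u, hu2⟩ : Even m)] at hδN
      omega
    rcases le_or_gt (2*e+1) m with hsm | hsm
    · -- s = 2e+1 ≤ m
      have : (2*e+1 = m - 1) ∨ (2*e+1+3 ≤ m ∧ 4 ≤ m) := by omega
      rcases this with h | ⟨h, h'⟩
      · exact core_even_boundary q N n m δ x y hq2 hN hnN hδN' hx1 hx2 hy1 hy2
          (by omega) (h ▸ hdvd)
      · exact core_even_small q N n m δ x y (2*e+1) hq2 hN hnN hδN' hx1 hx2 hy1 hy2 h' h hdvd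
    · -- flip
      have hflip := flip_dvd n q m x y (2*e+1) (by omega) (by omega) h2m hdvd
      set s' : ℕ := 2*m - (2*e+1) with hs'
      have : (s' = m - 1) ∨ (s'+3 ≤ m ∧ 4 ≤ m) := by omega
      rcases this with h | ⟨h, h'⟩
      · exact core_even_boundary q N n m δ y x hq2 hN hnN hδN' hy1 hy2 hx1 hx2
          (by omega) (h ▸ hflip)
      · exact core_even_small q N n m δ y x s' hq2 hN hnN hδN' hy1 hy2 hx1 hx2 h' h hflip
  · -- m odd
    have hδN' : δ * N ≤ q ^ m - 1 := by
      rw [if_neg (Nat.not_even_iff_odd.2 hpar)] at hδN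
      simpa using hδN
    rcases le_or_gt (2*e+1) m with hsm | hsm
    · exact core_odd q N n m δ x y (2*e+1) hq2 hN hnN hδN' hx1 hx2 hy1 hy2 hsm hdvd
    · have hflip := flip_dvd n q m x y (2*e+1) (by omega) (by omega) h2m hdvd
      exact core_odd q N n m δ y x (2*m - (2*e+1)) hq2 hN hnN hδN' hy1 hy2 hx1 hx2
        (by omega) hflip
end

section
/- Let q be a prime power, m = ord_{n}(q) with n = q^{2m} − 1, and m odd. Let Z = C_b ∪ ⋯ ∪ C_{b+δ−2} be a union of consecutive q²-ary cyclotomic cosets modulo n with 0 ∉ Z and δ > q^m − 1. Then Z ∩ Z^{−q} ≠ ∅: there is an integer α with s = α(q^m − 1) ∈ Z and −q·s·q^{m−1} ≡ s (mod n). Hence the primitive BCH code over F_{q²} of length q^{2m}−1 with designed distance δ > q^m − 1 cannot contain its Hermitian dual. -/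
/-- for `n = q^{2m} − 1` with `m` odd, and `Z = C_b ∪ ⋯ ∪ C_{b+δ−2}`
a union of consecutive q²-ary cyclotomic cosets with `0 ∉ Z` and `δ > q^m − 1`,
one has `Z ∩ Z^{−q} ≠ ∅`: some `s = α(q^m − 1) ∈ Z` satisfies
`−q·s·q^{m−1} ≡ s (mod n)`.  Hence the primitive BCH code over `F_{q²}` of such
designed distance cannot contain its Hermitian dual. -/
theorem bch_hermitian_primitive_odd (n q m b δ : ℕ)
    (hq : IsPrimePow q) (hn : n = q ^ (2 * m) - 1)
    (hm : m = orderOf ((q : ZMod n) ^ 2)) (hmodd : Odd m)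
    (hδ : q ^ m - 1 < δ)
    (Z : Set ℕ)
    (hZ : Z = ⋃ x ∈ Set.Icc b (b + δ - 2), {z : ℕ | ∃ j : ℕ, z = x * (q ^ 2) ^ j % n})
    (h0 : 0 ∉ Z) :
    (Z ∩ ((fun z => (n - z % n) * q % n) '' Z)).Nonempty ∧
    ∃ α : ℕ, α * (q ^ m - 1) ∈ Z ∧
      n ∣ α * (q ^ m - 1) * q ^ m + α * (q ^ m - 1) := by
  set K := q ^ m - 1 with hK
  have hq2 : 2 ≤ q := hq.two_le
  have hm1 : 0 < m := hmodd.pos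
  have hqm : 2 ≤ q ^ m := Nat.one_lt_pow (by omega) (by omega)
  have hKpos : 0 < K := by omega
  have key1 : K * (q ^ m + 1) + 1 = q ^ (2 * m) := by
    obtain ⟨a, ha⟩ : ∃ a, q ^ m = a + 1 := ⟨q ^ m - 1, by omega⟩
    rw [hK, pow_mul', ha]
    simp only [Nat.add_sub_cancel]
    ring
  have hKn : K * (q ^ m + 1) = n := by omega
  have hnpos : 0 < n := by
    have := Nat.mul_pos hKpos (show 0 < q ^ m + 1 by omega)
    omega
  set t := (b + (K - 1)) / K with ht
  have hdm := Nat.div_add_mod (b + (K - 1)) K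
  have hml := Nat.mod_lt (b + (K - 1)) hKpos
  set x := K * t with hx
  have hxb : b ≤ x := by omega
  have hxu : x ≤ b + (K - 1) := by omega
  have hqpow1 : (q ^ 2) ^ ((m - 1) / 2) = q ^ (m - 1) := by
    rw [← pow_mul]
    congr 1
    have := Nat.odd_iff.mp hmodd
    omega
  have hqpow2 : q ^ m = q ^ (m - 1) * q := by
    conv_lhs => rw [show m = (m - 1) + 1 from by omega]
    rw [pow_succ]
  set s0 := x % n with hs0
  have hs0Z : s0 ∈ Z := by
    rw [hZ]
    simp only [Set.mem_iUnion, Set.mem_setOf_eq, Set.mem_Icc]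
    exact ⟨x, ⟨hxb, by omega⟩, 0, by simp [hs0]⟩
  set z := x * q ^ (m - 1) % n with hz
  have hzZ : z ∈ Z := by
    rw [hZ]
    simp only [Set.mem_iUnion, Set.mem_setOf_eq, Set.mem_Icc]
    exact ⟨x, ⟨hxb, by omega⟩, (m - 1) / 2, by rw [hqpow1, hz]⟩
  have hzlt : z < n := Nat.mod_lt _ hnpos
  have hd2 : n ∣ x * (q ^ m + 1) := ⟨t, by rw [← hKn]; ring⟩
  have key : ((n - z) * q) % n = x % n := by
    have hdv : (n : ℤ) ∣ (x : ℤ) - (((n - z) * q : ℕ) : ℤ) := by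
      have d1 : (n : ℤ) ∣ (x : ℤ) * (q : ℤ) ^ (m - 1) - (z : ℤ) := by
        have h := (Nat.modEq_iff_dvd).mp (Nat.mod_modEq (x * q ^ (m - 1)) n)
        rw [← hz] at h
        push_cast at h
        exact h
      rw [hqpow2] at hd2
      have d2 : (n : ℤ) ∣ (x : ℤ) * ((q : ℤ) ^ (m - 1) * (q : ℤ) + 1) := by
        have := Int.natCast_dvd_natCast.mpr hd2
        push_cast at this
        exact this
      obtain ⟨k1, hk1⟩ := d1
      obtain ⟨k2, hk2⟩ := d2
      refine ⟨k2 - q * k1 - q, ?_⟩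
      push_cast [Nat.cast_sub hzlt.le]
      linear_combination hk2 - (q : ℤ) * hk1
    exact (Nat.modEq_iff_dvd).mpr hdv
  have hKs0 : K ∣ s0 := (Nat.dvd_mod_iff ⟨q ^ m + 1, hKn.symm⟩).mpr ⟨t, hx⟩
  obtain ⟨α, hα⟩ := hKs0
  have hαK : α * K = s0 := by rw [hα]; ring
  refine ⟨⟨s0, hs0Z, ⟨z, hzZ, ?_⟩⟩, α, ?_, ⟨α, ?_⟩⟩
  · show (n - z % n) * q % n = s0
    rw [Nat.mod_eq_of_lt hzlt, key]
  · rw [hαK]; exact hs0Z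
  · rw [← hKn]; ring
end

section
/- Let q be a prime power, m > 2 even, n = q^{2m} − 1, and δ > 2(q^{m+1} − q² + 1). If Z = C_b ∪ ⋯ ∪ C_{b+δ−2} is a union of consecutive q²-ary cyclotomic cosets modulo n with 0 ∉ Z, then Z ∩ Z^{−q} ≠ ∅, where Z^{−q} = { −q·z mod n : z ∈ Z }. Hence such a primitive BCH code over F_{q²} cannot contain its Hermitian dual. -/
/-- for `m > 2` even, `n = q^{2m} − 1`, and `Z = C_b ∪ ⋯ ∪ C_{b+δ−2}`
a union of consecutive q²-ary cyclotomic cosets with `0 ∉ Z` and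
`δ > 2(q^{m+1} − q² + 1)`, one has `Z ∩ Z^{−q} ≠ ∅`; hence such a primitive BCH
code over `F_{q²}` cannot contain its Hermitian dual. -/
theorem bch_hermitian_primitive_even (n q m b δ : ℕ)
    (hq : IsPrimePow q) (hm2 : 2 < m) (hmeven : Even m) (hn : n = q ^ (2 * m) - 1)
    (hδ : 2 * (q ^ (m + 1) - q ^ 2 + 1) < δ)
    (Z : Set ℕ)
    (hZ : Z = ⋃ x ∈ Set.Icc b (b + δ - 2), {z : ℕ | ∃ j : ℕ, z = x * (q ^ 2) ^ j % n})
    (h0 : 0 ∉ Z) :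
    (Z ∩ ((fun z => (n - z % n) * q % n) '' Z)).Nonempty := by
  have hq2 : 2 ≤ q := hq.two_le
  obtain ⟨t, ht⟩ := hmeven
  have hm4 : 4 ≤ m := by omega
  obtain ⟨d, rfl⟩ : ∃ d, δ = d + 2 := ⟨δ - 2, by omega⟩
  set A := q ^ (m - 1) with hA
  set B := q ^ (m + 1) with hB
  have hq24 : 4 ≤ q ^ 2 := by nlinarith
  have hq2A : q ^ 2 ≤ A := Nat.pow_le_pow_right (by omega) (by omega)
  have hBA : B = A * q ^ 2 := by rw [hA, hB, ← pow_add]; congr 1; omega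
  have hABn : A * B = n + 1 := by
    rw [hA, hB, ← pow_add]
    have h1 : m - 1 + (m + 1) = 2 * m := by omega
    rw [h1, hn]
    have h2 : 1 ≤ q ^ (2 * m) := Nat.one_le_pow _ _ (by omega)
    omega
  have hA2 : 4 ≤ A := by omega
  have h2AB : 2 * A ≤ B := by nlinarith
  have h2q2B : 2 * q ^ 2 ≤ B := by nlinarith
  have hdlb : 2 * B + 1 ≤ d + 2 * q ^ 2 := by omega
  have hdB : B + 1 ≤ d := by omega
  have hdA : 2 * A + 1 ≤ d := by omega
  have hn0 : 0 < n := by nlinarith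
  have hB0 : 0 < B := by omega
  have hA0 : 0 < A := by omega
  -- membership helper
  have hmem : ∀ x' j, b ≤ x' → x' ≤ b + d → x' * (q ^ 2) ^ j % n ∈ Z := by
    intro x' j h1 h2
    rw [hZ]
    exact Set.mem_iUnion₂.mpr ⟨x', Set.mem_Icc.mpr ⟨h1, by omega⟩, j, rfl⟩
  -- digits of b mod n
  obtain ⟨a, g, hg, han⟩ : ∃ a g, n * g + a = b ∧ a < n :=
    ⟨b % n, b / n, Nat.div_add_mod b n, Nat.mod_lt b hn0⟩
  have ha1 : 1 ≤ a := by
    rcases Nat.eq_zero_or_pos a with h | h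
    · exfalso; apply h0
      have h1 := hmem b 0 le_rfl (by omega)
      rw [pow_zero, mul_one, show b = n * g from by omega, Nat.mul_mod_right] at h1
      exact h1
    · exact h
  have had : a + d < n := by
    by_contra hcon
    push_neg at hcon
    apply h0
    have h1 := hmem (b + (n - a)) 0 (by omega) (by omega)
    rw [pow_zero, mul_one] at h1
    have h2 : n * (g + 1) = n * g + n := by ring
    rw [show b + (n - a) = n * (g + 1) from by omega, Nat.mul_mod_right] at h1
    exact h1
  -- block index u
  obtain ⟨e, f, hef, hfA⟩ : ∃ e f, A * e + f = a ∧ f < A :=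
    ⟨a / A, a % A, Nat.div_add_mod a A, Nat.mod_lt _ hA0⟩
  have huA : (e + 1) * A = A * e + A := by ring
  have hua1 : a < (e + 1) * A := by omega
  have hua2 : (e + 1) * A ≤ a + A := by omega
  have huB : e + 1 ≤ B + 1 := by
    by_contra hcon
    push_neg at hcon
    have h1 : (B + 2) * A ≤ (e + 1) * A := Nat.mul_le_mul_right A (by omega)
    have h2 : (B + 2) * A = A * B + 2 * A := by ring
    omega
  set u := e + 1 with hu
  -- lower end of J
  obtain ⟨c, hc1, hc2⟩ : ∃ c, c + (a + d) = n ∧ 1 ≤ c := ⟨n - (a + d), by omega, by omega⟩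
  -- k, w
  obtain ⟨k, r, hkr, hrB⟩ : ∃ k r, B * k + r = (c - u) + (B - 1) ∧ r < B :=
    ⟨_, _, Nat.div_add_mod _ _, Nat.mod_lt _ hB0⟩
  have hk0 : k = 0 ∨ B ≤ B * k := by
    rcases Nat.eq_zero_or_pos k with h | h
    · exact Or.inl h
    · exact Or.inr (Nat.le_mul_of_pos_right B h)
  have hwc : c ≤ u + B * k := by
    rcases le_or_gt c u with h | h
    · omega
    · omega
  have hwn : u + B * k + a ≤ n := by
    rcases le_or_gt c u with h | h
    · rcases hk0 with h1 | h1
      · subst h1; omega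
      · omega
    · omega
  set w := u + B * k with hw
  have hkA : k < A := by
    by_contra hcon
    push_neg at hcon
    have h1 : B * A ≤ B * k := Nat.mul_le_mul_left B hcon
    have h2 : B * A = A * B := by ring
    omega
  -- y
  set y := u * A + k with hy
  have hyI1 : a ≤ y := by omega
  have hyI2 : y ≤ a + d := by omega
  -- x
  obtain ⟨x, hxw⟩ : ∃ x, x + w = n := ⟨n - w, by omega⟩
  have hxI1 : a ≤ x := by omega
  have hxI2 : x ≤ a + d := by omega
  have hxn : x < n := by omega
  -- x ∈ Z
  have hxZ : x ∈ Z := by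
    have h1 := hmem (b + (x - a)) 0 (by omega) (by omega)
    rw [pow_zero, mul_one, show b + (x - a) = n * g + x from by omega,
      Nat.mul_add_mod, Nat.mod_eq_of_lt hxn] at h1
    exact h1
  -- z'
  have hz'Z : (b + (y - a)) * (q ^ 2) ^ t % n ∈ Z := hmem _ t (by omega) (by omega)
  set z' := (b + (y - a)) * (q ^ 2) ^ t % n with hz'
  have hz'n : z' < n := Nat.mod_lt _ hn0
  -- key nat identities
  have hq2t : (q ^ 2) ^ t = q ^ m := by rw [← pow_mul]; congr 1; omega
  have hqm1 : q ^ m * q = B := by rw [hB, pow_succ]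
  have hyB : y * B = u * n + w := by
    calc y * B = u * (A * B) + B * k := by rw [hy]; ring
    _ = u * (n + 1) + B * k := by rw [hABn]
    _ = u * n + w := by rw [hw]; ring
  have hby : b + (y - a) = n * g + y := by omega
  -- final computation
  refine ⟨x, hxZ, z', hz'Z, ?_⟩
  show (n - z' % n) * q % n = x
  rw [Nat.mod_eq_of_lt hz'n]
  have hcast : (((n - z') * q : ℕ) : ZMod n) = ((x : ℕ) : ZMod n) := by
    have hx0 : ((x : ℕ) : ZMod n) + ((w : ℕ) : ZMod n) = 0 := by
      have := congrArg (Nat.cast : ℕ → ZMod n) hxw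
      push_cast at this
      rw [this, ZMod.natCast_self]
    have hz'c : ((z' : ℕ) : ZMod n) = ((y : ℕ) : ZMod n) * (q : ZMod n) ^ m := by
      rw [hz', ZMod.natCast_mod, hby, hq2t]
      push_cast
      rw [ZMod.natCast_self]
      ring
    have hyBc : ((y : ℕ) : ZMod n) * ((B : ℕ) : ZMod n) = ((w : ℕ) : ZMod n) := by
      have h := congrArg (Nat.cast : ℕ → ZMod n) hyB
      push_cast at h
      simp only [ZMod.natCast_self, mul_zero, zero_mul, add_zero, zero_add] at h
      linear_combination h
    rw [Nat.cast_mul, Nat.cast_sub hz'n.le, ZMod.natCast_self, hz'c]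
    have hqB : ((q : ZMod n)) ^ m * (q : ZMod n) = ((B : ℕ) : ZMod n) := by
      rw [← hqm1]; push_cast; ring
    calc (0 - (y : ZMod n) * (q : ZMod n) ^ m) * (q : ZMod n)
        = -((y : ZMod n) * ((q : ZMod n) ^ m * (q : ZMod n))) := by ring
    _ = -((y : ZMod n) * ((B : ℕ) : ZMod n)) := by rw [hqB]
    _ = -((w : ℕ) : ZMod n) := by rw [hyBc]
    _ = (x : ZMod n) := by
        have : ((x : ℕ) : ZMod n) = ((x : ℕ) : ZMod n) + (((w : ℕ) : ZMod n) + -((w : ℕ) : ZMod n)) := by ring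
        rw [this, ← add_assoc, hx0]; ring
  have hmodeq := (ZMod.natCast_eq_natCast_iff _ _ _).mp hcast
  rw [Nat.ModEq] at hmodeq
  rw [hmodeq, Nat.mod_eq_of_lt hxn]
end

section
/- Let q be a prime power with q ≡ 1 (mod n) for a positive integer n (so ord_n(q) = 1). Then the narrow-sense BCH (Reed–Solomon-type) code of length n over F_q with designed distance δ, whose defining set is Z = {1, 2, …, δ−1}, contains its Euclidean dual if and only if 2 ≤ δ ≤ ⌊(n+1)/2⌋. Equivalently, Z ∩ { n − z : z ∈ Z } = ∅ holds if and only if δ ≤ ⌊(n+1)/2⌋. -/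
/-- when `q ≡ 1 (mod n)` (so `ord_n(q) = 1` and cyclotomic cosets are
singletons), the narrow-sense BCH (Reed–Solomon-type) code with defining set
`Z = {1,…,δ−1}` contains its Euclidean dual iff `2 ≤ δ ≤ ⌊(n+1)/2⌋`; equivalently
`Z ∩ {n − z : z ∈ Z} = ∅ ↔ δ ≤ ⌊(n+1)/2⌋`. -/
theorem reed_solomon_dual_containing_iff (n q δ : ℕ)
    (hq : IsPrimePow q) (hn : 0 < n) (hqn : q % n = 1)
    (hδ2 : 2 ≤ δ) (hδn : δ ≤ n) :
    (Finset.Icc 1 (δ - 1)) ∩ (Finset.Icc 1 (δ - 1)).image (fun z => n - z) = ∅ ↔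
      δ ≤ (n + 1) / 2 := by
  constructor
  · intro h
    by_contra hlt
    have h2 : n + 2 ≤ 2 * δ := by omega
    have hx : (n - (δ - 1)) ∈
        (Finset.Icc 1 (δ - 1)) ∩ (Finset.Icc 1 (δ - 1)).image (fun z => n - z) := by
      simp only [Finset.mem_inter, Finset.mem_image, Finset.mem_Icc]
      exact ⟨⟨by omega, by omega⟩, ⟨δ - 1, ⟨by omega, le_rfl⟩, rfl⟩⟩
    rw [h] at hx
    exact absurd hx (Finset.notMem_empty _)
  · intro h
    have h2 : 2 * δ ≤ n + 1 := by omega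
    ext x
    simp only [Finset.mem_inter, Finset.mem_image, Finset.mem_Icc, Finset.notMem_empty,
      iff_false, not_and, not_exists]
    rintro ⟨hx1, hx2⟩ z ⟨hz1, hz2⟩ hzx
    omega
end

section
/- Let q be a prime power, m = ord_n(q²) ≥ 2, gcd(n,q)=1, and set δ_max = ⌊n(q^{m+[m even]} − 1 − (q²−2)[m even])/(q^{2m}−1)⌋. Suppose 2 ≤ δ ≤ δ_max and let x, y ∈ {1,…,δ_max−1} and 0 ≤ j ≤ ⌊(m−1)/2⌋ with y ≡ −x·q^{2j+1} (mod n). Then x·q^{2j+1} < n and y = n − x·q^{2j+1} ≥ δ_max, a contradiction; hence no such pair (x,y) exists. -/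
-- key arithmetic lemma: D * (1+P) ≤ N + P
lemma herm_key (q m j : ℕ) (hq2 : 2 ≤ q) (hm2 : 2 ≤ m) (hj : j ≤ (m - 1) / 2) :
    (q ^ (m + (if Even m then 1 else 0)) - 1 -
        (q ^ 2 - 2) * (if Even m then 1 else 0)) * (1 + q ^ (2 * j + 1)) ≤
      (q ^ (2 * m) - 1) + q ^ (2 * j + 1) := by
  have hq1 : 1 ≤ q := by omega
  have hq4 : 4 ≤ q ^ 2 := by nlinarith
  by_cases hev : Even m
  · simp only [if_pos hev]
    obtain ⟨k, hk⟩ := hev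
    have hexp : 2 * j + 1 ≤ m - 1 := by omega
    have hP : q ^ (2 * j + 1) ≤ q ^ (m - 1) := Nat.pow_le_pow_right hq1 hexp
    have hP1 : 1 ≤ q ^ (2 * j + 1) := Nat.one_le_pow _ _ (by omega)
    have hA1 : 1 ≤ q ^ (m - 1) := Nat.one_le_pow _ _ (by omega)
    have hAB : q ^ (m - 1) * q ^ (m + 1) = q ^ (2 * m) := by
      rw [← pow_add]; congr 1; omega
    have hq2m1 : q ^ 2 ≤ q ^ (m + 1) := Nat.pow_le_pow_right hq1 (by omega)
    have h2m : 1 ≤ q ^ (2 * m) := Nat.one_le_pow _ _ (by omega)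
    have hsub : q ^ 2 - 2 ≤ q ^ (m + 1) - 1 := by omega
    have hPz : ((q:ℤ)) ^ (2 * j + 1) ≤ (q:ℤ) ^ (m - 1) := by exact_mod_cast hP
    have hq2m1z : ((q:ℤ)) ^ 2 ≤ (q:ℤ) ^ (m + 1) := by exact_mod_cast hq2m1
    have hABz : ((q:ℤ)) ^ (m - 1) * (q:ℤ) ^ (m + 1) = (q:ℤ) ^ (2 * m) := by exact_mod_cast hAB
    have hAq2 : q ^ (m - 1) * q ^ 2 = q ^ (m + 1) := by rw [← pow_add]; congr 1; omega
    have hAq2z : ((q:ℤ)) ^ (m - 1) * (q:ℤ) ^ 2 = (q:ℤ) ^ (m + 1) := by exact_mod_cast hAq2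
    have hP1z : (1:ℤ) ≤ (q:ℤ) ^ (2 * j + 1) := by exact_mod_cast hP1
    have hA1z : (1:ℤ) ≤ (q:ℤ) ^ (m - 1) := by exact_mod_cast hA1
    have hq4z : (4:ℤ) ≤ (q:ℤ) ^ 2 := by exact_mod_cast hq4
    simp only [mul_one]
    zify [hsub, show (2:ℕ) ≤ q ^ 2 by omega, h2m, show (1:ℕ) ≤ q ^ (m+1) by omega]
    nlinarith [mul_le_mul_of_nonneg_right hPz (sub_nonneg.mpr hq2m1z), hABz, hAq2z, hP1z, hA1z, hq4z]
  · simp only [if_neg hev]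
    have hexp : 2 * j + 1 ≤ m := by omega
    have hP : q ^ (2 * j + 1) ≤ q ^ m := Nat.pow_le_pow_right hq1 hexp
    have hP1 : 1 ≤ q ^ (2 * j + 1) := Nat.one_le_pow _ _ (by omega)
    have hAB : q ^ m * q ^ m = q ^ (2 * m) := by rw [← pow_add]; congr 1; omega
    have hm4 : 4 ≤ q ^ m := by
      calc 4 ≤ q ^ 2 := hq4
      _ ≤ q ^ m := Nat.pow_le_pow_right hq1 hm2
    have h2m : 1 ≤ q ^ (2 * m) := Nat.one_le_pow _ _ (by omega)
    have hPz : ((q:ℤ)) ^ (2 * j + 1) ≤ (q:ℤ) ^ m := by exact_mod_cast hP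
    have hABz : ((q:ℤ)) ^ m * (q:ℤ) ^ m = (q:ℤ) ^ (2 * m) := by exact_mod_cast hAB
    have hP1z : (1:ℤ) ≤ (q:ℤ) ^ (2 * j + 1) := by exact_mod_cast hP1
    have hm4z : (4:ℤ) ≤ (q:ℤ) ^ m := by exact_mod_cast hm4
    simp only [add_zero, mul_zero, Nat.sub_zero]
    zify [show (1:ℕ) ≤ q ^ m by omega, h2m]
    nlinarith [mul_le_mul_of_nonneg_right hPz (by linarith : (0:ℤ) ≤ (q:ℤ) ^ m - 2), hABz, hP1z, hm4z]

/-- core arithmetic estimate for Hermitian dual containment: with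
`m = ord_n(q²) ≥ 2` and `δ_max = ⌊n(q^{m+[m even]} − 1 − (q²−2)[m even])/(q^{2m}−1)⌋`,
there is no pair `x, y ∈ {1,…,δ_max−1}` and `0 ≤ j ≤ ⌊(m−1)/2⌋` with
`y ≡ −x·q^{2j+1} (mod n)` (one would get `x·q^{2j+1} < n` and
`y = n − x·q^{2j+1} ≥ δ_max`, a contradiction). -/
theorem hermitian_core_estimate (n q m δ x y j : ℕ)
    (hq : IsPrimePow q) (hn : 0 < n) (hcop : Nat.Coprime n q)
    (hm : m = orderOf ((q : ZMod n) ^ 2)) (hm2 : 2 ≤ m)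
    (hδ2 : 2 ≤ δ)
    (hδmax : δ ≤ n * (q ^ (m + (if Even m then 1 else 0)) - 1 -
        (q ^ 2 - 2) * (if Even m then 1 else 0)) / (q ^ (2 * m) - 1))
    (hx : x ∈ Finset.Icc 1 (n * (q ^ (m + (if Even m then 1 else 0)) - 1 -
        (q ^ 2 - 2) * (if Even m then 1 else 0)) / (q ^ (2 * m) - 1) - 1))
    (hy : y ∈ Finset.Icc 1 (n * (q ^ (m + (if Even m then 1 else 0)) - 1 -
        (q ^ 2 - 2) * (if Even m then 1 else 0)) / (q ^ (2 * m) - 1) - 1))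
    (hj : j ≤ (m - 1) / 2)
    (hcong : (y + x * q ^ (2 * j + 1)) % n = 0) :
    False := by
  have hq2 : 2 ≤ q := hq.two_le
  set P := q ^ (2 * j + 1) with hPdef
  set D := q ^ (m + (if Even m then 1 else 0)) - 1 -
      (q ^ 2 - 2) * (if Even m then 1 else 0) with hDdef
  set N := q ^ (2 * m) - 1 with hNdef
  set d := n * D / N with hddef
  rw [Finset.mem_Icc] at hx hy
  -- n ∣ q^(2m) - 1
  have hone : ((q : ZMod n) ^ 2) ^ m = 1 := by rw [hm]; exact pow_orderOf_eq_one _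
  have hcast : ((q ^ (2 * m) : ℕ) : ZMod n) = ((1 : ℕ) : ZMod n) := by
    push_cast
    rw [show 2 * m = m * 2 by ring, pow_mul, ← hone]
    ring_nf
  have hmodeq : q ^ (2 * m) ≡ 1 [MOD n] := (ZMod.natCast_eq_natCast_iff _ _ _).mp hcast
  have h1le : 1 ≤ q ^ (2 * m) := Nat.one_le_pow _ _ (by omega)
  have hdvd : n ∣ N := by
    rw [hNdef]
    exact (Nat.modEq_iff_dvd' h1le).mp hmodeq.symm
  have hNpos : 0 < N := by
    have : 4 ≤ q ^ (2 * m) := by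
      calc 4 ≤ q ^ 2 := by nlinarith
      _ ≤ q ^ (2 * m) := Nat.pow_le_pow_right (by omega) (by omega)
    omega
  have hnN : n ≤ N := Nat.le_of_dvd hNpos hdvd
  -- key estimate
  have hkey : D * (1 + P) ≤ N + P := herm_key q m j hq2 hm2 hj
  -- d * (1+P) ≤ n + P
  have h1 : d * (1 + P) * N ≤ n * (D * (1 + P)) := by
    calc d * (1 + P) * N = (d * N) * (1 + P) := by ring
    _ ≤ (n * D) * (1 + P) := Nat.mul_le_mul_right _ (Nat.div_mul_le_self _ _)
    _ = n * (D * (1 + P)) := by ring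
  have h2 : n * (D * (1 + P)) ≤ N * (n + P) := by
    calc n * (D * (1 + P)) ≤ n * (N + P) := Nat.mul_le_mul_left _ hkey
    _ = n * N + n * P := by ring
    _ ≤ n * N + N * P := by
        have := Nat.mul_le_mul_right P hnN; omega
    _ = N * (n + P) := by ring
  have hdP : d * (1 + P) ≤ n + P := by
    have := (Nat.le_div_iff_mul_le hNpos).mpr (le_trans h1 h2)
    rwa [Nat.mul_div_cancel_left _ hNpos] at this
  -- contradiction
  have hd1 : 1 ≤ d := by omega
  have hbound : y + x * P ≤ (d - 1) * (1 + P) := by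
    calc y + x * P ≤ (d - 1) + (d - 1) * P := by
          have := Nat.mul_le_mul_right P hx.2; omega
    _ = (d - 1) * (1 + P) := by ring
  have hsplit : (d - 1) * (1 + P) + (1 + P) = d * (1 + P) := by
    rw [← Nat.succ_mul]; congr 1; omega
  have hlt : y + x * P < n := by omega
  have hpos : 0 < y + x * P := by omega
  have := Nat.le_of_dvd hpos (Nat.dvd_of_mod_eq_zero hcong)
  omega
end

section
/- Let q be a prime power, m = ord_n(q) ≥ 2, and 0 ≤ j ≤ ⌊m/2⌋. If 1 ≤ x ≤ ⌊κ⌋ − 1 where κ = n(q^⌈m/2⌉ − 1 − (q−2)[m odd])/(q^m − 1), then 1 ≤ x·q^j < n, and moreover n − x·q^{⌊m/2⌋} ≥ ⌊κ⌋. -/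
/-!
Write `Q = q ^ ⌊m/2⌋`. Since `n ∣ q^m - 1`, we have `n ≤ q^m - 1`, and this gives
`κ (1 + Q) ≤ n + Q`: for even `m` one has `κ = n / (Q + 1)` exactly, and for odd `m`
the correction term `(q - 2)` is what keeps the excess `n (Q - q + 2) / (q^m - 1)` below `Q`.
Then `x ≤ ⌊κ⌋ - 1 ≤ κ - 1` gives `⌊κ⌋ + x Q ≤ κ + (κ - 1) Q ≤ n`.
-/

theorem two_le_of_two_le_orderOf {n q : ℕ} (h : 2 ≤ orderOf (q : ZMod n)) : 2 ≤ q := by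
  by_contra! hq
  interval_cases q
  · rw [Nat.cast_zero] at h
    have hpow : (0 : ZMod n) ^ orderOf (0 : ZMod n) = 1 := pow_orderOf_eq_one _
    rw [zero_pow (by omega)] at hpow
    have : Subsingleton (ZMod n) := subsingleton_of_zero_eq_one hpow
    rw [orderOf_eq_one_iff.mpr (Subsingleton.elim _ _)] at h
    omega
  · simp at h

theorem lt_pow_of_pow_modEq_one {n q m : ℕ} (hq : 2 ≤ q) (hm : 0 < m) (h : q ^ m ≡ 1 [MOD n]) :
    n < q ^ m := by
  have hqm : 2 ≤ q ^ m := hq.trans (Nat.le_self_pow hm.ne' q)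
  have hdvd : n ∣ q ^ m - 1 := (Nat.modEq_iff_dvd' (by omega)).mp h.symm
  have := Nat.le_of_dvd (by omega) hdvd
  omega

theorem pow_orderOf_natCast_modEq_one {n q : ℕ} :
    q ^ orderOf (q : ZMod n) ≡ 1 [MOD n] := by
  rw [← ZMod.natCast_eq_natCast_iff, Nat.cast_pow, Nat.cast_one]
  exact pow_orderOf_eq_one _

noncomputable def bchKappa (n q m : ℕ) : ℝ :=
  (n : ℝ) * ((q : ℝ) ^ ((m + 1) / 2) - 1 - ((q : ℝ) - 2) * (if Odd m then 1 else 0)) /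
    ((q : ℝ) ^ m - 1)

theorem mul_sub_one_div_sq_sub_one_mul {n Q : ℝ} (hQ : 1 < Q) :
    n * (Q - 1) / (Q ^ 2 - 1) * (1 + Q) = n := by
  have : Q ^ 2 - 1 ≠ 0 := by nlinarith
  field_simp
  ring

theorem mul_sub_div_mul_sq_sub_one_mul_le {n q Q : ℝ} (hq : 2 ≤ q) (hQ : 1 ≤ Q) (hn : 0 ≤ n)
    (hnq : n ≤ Q ^ 2 * q - 1) :
    n * (q * Q - 1 - (q - 2)) / (Q ^ 2 * q - 1) * (1 + Q) ≤ n + Q := by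
  have hD : 0 < Q ^ 2 * q - 1 := by nlinarith
  rw [div_mul_eq_mul_div, div_le_iff₀ hD]
  -- `n (qQ - q + 1)(1 + Q) = n (qQ² - 1) + n (Q - q + 2)`, and `n (Q - q + 2) ≤ n Q ≤ (qQ² - 1) Q`
  nlinarith [mul_le_mul_of_nonneg_right hnq (by linarith : 0 ≤ Q), mul_nonneg hn (sub_nonneg.mpr hq)]

theorem bchKappa_mul_one_add_le {n q m : ℕ} (hq : 2 ≤ q) (hm : 0 < m) (hn : n < q ^ m) :
    bchKappa n q m * (1 + (q : ℝ) ^ (m / 2)) ≤ n + (q : ℝ) ^ (m / 2) := by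
  have hqR : (2 : ℝ) ≤ q := by exact_mod_cast hq
  have hnR : (n : ℝ) ≤ (q : ℝ) ^ m - 1 := by
    have : (n : ℝ) + 1 ≤ (q : ℝ) ^ m := by exact_mod_cast hn
    linarith
  unfold bchKappa
  rcases Nat.even_or_odd' m with ⟨a, rfl | rfl⟩
  · have ha : 0 < a := by omega
    rw [if_neg (Nat.not_odd_iff_even.mpr (even_two_mul a)),
      show (2 * a + 1) / 2 = a by omega, show 2 * a / 2 = a by omega, pow_mul', mul_zero,
      sub_zero, mul_sub_one_div_sq_sub_one_mul (one_lt_pow₀ (by linarith) ha.ne')]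
    linarith [pow_nonneg (by linarith : (0 : ℝ) ≤ q) a]
  · rw [if_pos (odd_two_mul_add_one a), show (2 * a + 1 + 1) / 2 = a + 1 by omega,
      show (2 * a + 1) / 2 = a by omega, mul_one, pow_succ' (q : ℝ) a, pow_succ, pow_mul']
    rw [pow_succ, pow_mul'] at hnR
    exact mul_sub_div_mul_sq_sub_one_mul_le hqR (one_le_pow₀ (by linarith)) (Nat.cast_nonneg n)
      hnR

theorem floor_add_mul_le_of_mul_one_add_le {κ : ℝ} {n x Q : ℕ} (h : κ * (1 + Q) ≤ n + Q)
    (hx : x + 1 ≤ ⌊κ⌋₊) : ⌊κ⌋₊ + x * Q ≤ n := by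
  have hκ : 0 ≤ κ := by
    by_contra! hneg
    rw [Nat.floor_eq_zero.mpr (by linarith)] at hx
    omega
  have hxκ : (x : ℝ) + 1 ≤ κ := by
    calc (x : ℝ) + 1 ≤ ⌊κ⌋₊ := by exact_mod_cast hx
      _ ≤ κ := Nat.floor_le hκ
  suffices ((⌊κ⌋₊ + x * Q : ℕ) : ℝ) ≤ n by exact_mod_cast this
  push_cast
  nlinarith [Nat.floor_le hκ, mul_le_mul_of_nonneg_right hxκ (Nat.cast_nonneg Q)]

theorem euclidean_core_estimate_general (n q m x j : ℕ)
    (hm : m = orderOf (q : ZMod n)) (hm2 : 2 ≤ m)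
    (hj : j ≤ m / 2)
    (hx1 : 1 ≤ x)
    (hx2 : x ≤ ⌊(n : ℝ) * ((q : ℝ) ^ ((m + 1) / 2) - 1 -
        ((q : ℝ) - 2) * (if Odd m then 1 else 0)) / ((q : ℝ) ^ m - 1)⌋₊ - 1) :
    1 ≤ x * q ^ j ∧ x * q ^ j < n ∧
      ⌊(n : ℝ) * ((q : ℝ) ^ ((m + 1) / 2) - 1 -
        ((q : ℝ) - 2) * (if Odd m then 1 else 0)) / ((q : ℝ) ^ m - 1)⌋₊ ≤
        n - x * q ^ (m / 2) := by
  change x ≤ ⌊bchKappa n q m⌋₊ - 1 at hx2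
  change 1 ≤ x * q ^ j ∧ x * q ^ j < n ∧ ⌊bchKappa n q m⌋₊ ≤ n - x * q ^ (m / 2)
  have hq : 2 ≤ q := two_le_of_two_le_orderOf (hm ▸ hm2)
  have hn : n < q ^ m := lt_pow_of_pow_modEq_one hq (by omega) (hm ▸ pow_orderOf_natCast_modEq_one)
  have hK : ⌊bchKappa n q m⌋₊ + x * q ^ (m / 2) ≤ n :=
    floor_add_mul_le_of_mul_one_add_le (by exact_mod_cast bchKappa_mul_one_add_le hq (by omega) hn)
      (by omega)
  have hjx : x * q ^ j ≤ x * q ^ (m / 2) :=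
    Nat.mul_le_mul_left x (Nat.pow_le_pow_right (by omega) hj)
  exact ⟨Nat.mul_pos hx1 (Nat.pow_pos (by omega)), by omega, by omega⟩

/-- central inequality for Euclidean dual containment: with
`m = ord_n(q) ≥ 2`, `0 ≤ j ≤ ⌊m/2⌋`, and
`κ = n(q^⌈m/2⌉ − 1 − (q−2)[m odd])/(q^m − 1)`, if `1 ≤ x ≤ ⌊κ⌋ − 1` then
`1 ≤ x·q^j < n` and `n − x·q^{⌊m/2⌋} ≥ ⌊κ⌋`. -/
theorem euclidean_core_estimate (n q m x j : ℕ)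
    (hq : IsPrimePow q) (hn : 0 < n) (hcop : Nat.Coprime n q)
    (hm : m = orderOf (q : ZMod n)) (hm2 : 2 ≤ m)
    (hj : j ≤ m / 2)
    (hx1 : 1 ≤ x)
    (hx2 : x ≤ ⌊(n : ℝ) * ((q : ℝ) ^ ((m + 1) / 2) - 1 -
        ((q : ℝ) - 2) * (if Odd m then 1 else 0)) / ((q : ℝ) ^ m - 1)⌋₊ - 1) :
    1 ≤ x * q ^ j ∧ x * q ^ j < n ∧
      ⌊(n : ℝ) * ((q : ℝ) ^ ((m + 1) / 2) - 1 -
        ((q : ℝ) - 2) * (if Odd m then 1 else 0)) / ((q : ℝ) ^ m - 1)⌋₊ ≤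
        n - x * q ^ (m / 2) :=
  euclidean_core_estimate_general n q m x j hm hm2 hj hx1 hx2
end
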